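/- arXiv:2505.14666 — 4 statements merged into one kernel-verified Lean document; each statement's English description precedes it below -/
import Mathlib

section
/- Let M be a symmetric k×k real matrix with M_{ii} ≥ 0.1 for all i and ∑_{j ≠ i} |M_{ij}| ≤ ρ for all i, where 0 < ρ ≤ 0.01. Then |log det(M) − ∑_{i=1}^k log(M_{ii})| ≤ C ρ² k for an absolute constant C. -/
open Matrix Finset

private lemma aux_log {x : ℝ} (hx : |x| ≤ 1/2) : |Real.log (1+x) - x| ≤ 2*x^2 := by
  have h1 : |(-x)| < 1 := by rw [abs_neg]; linarith
  have h := Real.abs_log_sub_add_sum_range_le h1 1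
  simp only [Finset.range_one, Finset.sum_singleton, pow_one, Nat.cast_one] at h
  have h4 : Real.log (1 + x) - x = (-x) ^ (0+1) / ((0:ℕ)+1) + Real.log (1 - -x) := by
    rw [sub_neg_eq_add]; push_cast; ring
  rw [← h4, abs_neg, sq_abs] at h
  have h2 : (1:ℝ) - |x| ≥ 1/2 := by linarith
  calc |Real.log (1+x) - x| ≤ x^2/(1-|x|) := by simpa using h
    _ ≤ 2*x^2 := by
        rw [div_le_iff₀ (by linarith)]
        nlinarith [sq_nonneg x, abs_nonneg x]

private lemma aux_trace (k : ℕ) (N : Matrix (Fin k) (Fin k) ℝ) (hN : N.IsHermitian) :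
    N.trace = ∑ i, hN.eigenvalues i := by
  conv_lhs => rw [hN.spectral_theorem]
  rw [Unitary.conjStarAlgAut_apply]
  rw [trace_mul_cycle, Unitary.coe_star_mul_self, one_mul, trace_diagonal]
  simp

private lemma aux_trace_sq (k : ℕ) (N : Matrix (Fin k) (Fin k) ℝ) (hN : N.IsHermitian) :
    (N*N).trace = ∑ i, hN.eigenvalues i ^ 2 := by
  set U : Matrix (Fin k) (Fin k) ℝ := (hN.eigenvectorUnitary : Matrix (Fin k) (Fin k) ℝ) with hU
  set D : Matrix (Fin k) (Fin k) ℝ := diagonal (RCLike.ofReal ∘ hN.eigenvalues) with hD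
  have hu : star U * U = 1 := Unitary.coe_star_mul_self _
  have key : N * N = U * (D * (D * star U)) := by
    conv_lhs => rw [hN.spectral_theorem]
    rw [Unitary.conjStarAlgAut_apply]
    simp only [← hU, ← hD, Matrix.mul_assoc]
    rw [← Matrix.mul_assoc (star U) U, hu, Matrix.one_mul]
  rw [key, trace_mul_comm]
  simp only [Matrix.mul_assoc]
  rw [hu, Matrix.mul_one, hD, diagonal_mul_diagonal, trace_diagonal]
  simp [sq]

private lemma aux_gersh (k : ℕ) (N : Matrix (Fin k) (Fin k) ℝ) (hN : N.IsHermitian) (i : Fin k) :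
    ∃ l, |hN.eigenvalues i - N l l| ≤ ∑ j ∈ univ.erase l, |N l j| := by
  have hm : hN.eigenvalues i ∈ spectrum ℝ N := hN.eigenvalues_mem_spectrum_real i
  have he : Module.End.HasEigenvalue (Matrix.toLin' N) (hN.eigenvalues i) := by
    rw [Module.End.hasEigenvalue_iff_mem_spectrum]
    have := AlgEquiv.spectrum_eq (Matrix.toLinAlgEquiv' : Matrix (Fin k) (Fin k) ℝ ≃ₐ[ℝ] _) N
    rw [show (Matrix.toLinAlgEquiv' N : (Fin k → ℝ) →ₗ[ℝ] (Fin k → ℝ)) = Matrix.toLin' N from rfl] at this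
    rwa [this]
  obtain ⟨l, hl⟩ := eigenvalue_mem_ball he
  refine ⟨l, ?_⟩
  rw [Metric.mem_closedBall, Real.dist_eq] at hl
  simpa [Real.norm_eq_abs] using hl

/-- If `M` is a symmetric `k × k` real matrix with diagonal entries at least `0.1` and
off-diagonal row `ℓ1` norms at most `ρ ≤ 0.01`, then the log determinant of `M` is within
`C ρ² k` of the sum of the logs of the diagonal entries, for an absolute constant `C`. -/
theorem log_det_near_sum_log_diag :
    ∃ C : ℝ, 0 < C ∧
      ∀ (k : ℕ) (ρ : ℝ) (M : Matrix (Fin k) (Fin k) ℝ),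
        M.IsSymm →
        (∀ i, 0.1 ≤ M i i) →
        (∀ i : Fin k, ∑ j ∈ univ.filter (fun j => j ≠ i), |M i j| ≤ ρ) →
        0 < ρ → ρ ≤ 0.01 →
        |Real.log M.det - ∑ i, Real.log (M i i)| ≤ C * ρ ^ 2 * k := by
  refine ⟨200, by norm_num, ?_⟩
  intro k ρ M hsym hdiag hrow hρ hρ'
  have hd : ∀ i, (0:ℝ) < M i i := fun i => lt_of_lt_of_le (by norm_num) (hdiag i)
  set s : Fin k → ℝ := fun i => (Real.sqrt (M i i))⁻¹ with hs_def
  have hs0 : ∀ i, 0 < s i := fun i => inv_pos.2 (Real.sqrt_pos.2 (hd i))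
  have hMsym : ∀ i j, M j i = M i j := fun i j => by
    conv_lhs => rw [← hsym]
    rfl
  set N : Matrix (Fin k) (Fin k) ℝ := diagonal s * M * diagonal s with hN_def
  have hNe : ∀ i j, N i j = s i * M i j * s j := by
    intro i j
    rw [hN_def, Matrix.mul_diagonal, Matrix.diagonal_mul]
  have hNd : ∀ i, N i i = 1 := by
    intro i
    rw [hNe]
    have h := Real.mul_self_sqrt (hd i).le
    have hne : Real.sqrt (M i i) ≠ 0 := Real.sqrt_ne_zero'.mpr (hd i)
    field_simp [hs_def]
    simp only [hs_def, inv_pow, Real.sq_sqrt (hd i).le, inv_mul_cancel₀ (hd i).ne']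
  have hNs : ∀ i j, N j i = N i j := by
    intro i j; rw [hNe, hNe, hMsym i j]; ring
  have hherm : N.IsHermitian := by
    show Nᴴ = N
    ext i j
    simp [Matrix.conjTranspose_apply, hNs i j]
  set ν : Fin k → ℝ := hherm.eigenvalues with hν
  -- off-diagonal bound for N
  have hsle : ∀ i, s i ≤ Real.sqrt 10 := by
    intro i
    have h1 : Real.sqrt (10⁻¹ : ℝ) ≤ Real.sqrt (M i i) := by
      apply Real.sqrt_le_sqrt
      rw [show (10:ℝ)⁻¹ = 0.1 by norm_num]
      exact hdiag i
    have h2 : (0:ℝ) < Real.sqrt (10⁻¹ : ℝ) := by positivity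
    have := inv_anti₀ h2 h1
    rwa [Real.sqrt_inv, inv_inv] at this
  have habs : ∀ i j, |N i j| ≤ 10 * |M i j| := by
    intro i j
    rw [hNe, abs_mul, abs_mul, abs_of_pos (hs0 i), abs_of_pos (hs0 j)]
    have h10 : Real.sqrt 10 * Real.sqrt 10 = 10 := Real.mul_self_sqrt (by norm_num)
    have hss : s i * s j ≤ 10 := by
      calc s i * s j ≤ Real.sqrt 10 * Real.sqrt 10 :=
            mul_le_mul (hsle i) (hsle j) (hs0 j).le (Real.sqrt_nonneg _)
        _ = 10 := h10
    calc s i * |M i j| * s j = (s i * s j) * |M i j| := by ring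
      _ ≤ 10 * |M i j| := mul_le_mul_of_nonneg_right hss (abs_nonneg _)
  have hoff : ∀ i, ∑ j ∈ univ.erase i, |N i j| ≤ 10 * ρ := by
    intro i
    calc ∑ j ∈ univ.erase i, |N i j| ≤ ∑ j ∈ univ.erase i, 10 * |M i j| :=
          Finset.sum_le_sum fun j _ => habs i j
      _ = 10 * ∑ j ∈ univ.filter (fun j => j ≠ i), |M i j| := by
          rw [Finset.filter_ne', Finset.mul_sum]
      _ ≤ 10 * ρ := by nlinarith [hrow i]
  -- Gershgorin
  have heig : ∀ i, |ν i - 1| ≤ 10 * ρ := by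
    intro i
    obtain ⟨l, hl⟩ := aux_gersh k N hherm i
    rw [hNd l] at hl
    exact hl.trans (hoff l)
  have hsmall : ∀ i, |ν i - 1| ≤ 1/10 := fun i => (heig i).trans (by linarith)
  have hνpos : ∀ i, 0 < ν i := by
    intro i
    have := abs_le.1 (hsmall i)
    linarith [this.1]
  -- trace identities
  have htr : ∑ i, ν i = (k : ℝ) := by
    rw [← aux_trace k N hherm]
    simp [Matrix.trace, Matrix.diag, hNd]
  have htr2 : ∑ i, ν i ^ 2 = (k : ℝ) + ∑ i, ∑ j ∈ univ.erase i, (N i j)^2 := by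
    rw [← aux_trace_sq k N hherm]
    have : (N*N).trace = ∑ i, ∑ j, N i j * N j i := by
      simp [Matrix.trace, Matrix.diag, Matrix.mul_apply]
    rw [this]
    have : ∀ i : Fin k, ∑ j, N i j * N j i = 1 + ∑ j ∈ univ.erase i, (N i j)^2 := by
      intro i
      rw [← Finset.add_sum_erase _ _ (Finset.mem_univ i), hNd i, one_mul]
      congr 1
      apply Finset.sum_congr rfl
      intro j _
      rw [hNs i j, sq]
    rw [Finset.sum_congr rfl fun i _ => this i, Finset.sum_add_distrib]
    simp
  have hsumsq : ∑ i, (ν i - 1)^2 ≤ 100 * ρ^2 * k := by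
    have key : ∑ i, (ν i - 1)^2 = ∑ i, ∑ j ∈ univ.erase i, (N i j)^2 := by
      have : ∑ i, (ν i - 1)^2 = (∑ i, ν i ^2) - 2 * (∑ i, ν i) + k := by
        rw [Finset.sum_congr rfl (fun i _ => by ring :
          ∀ i ∈ univ, (ν i - 1)^2 = ν i ^2 - 2 * ν i + 1)]
        rw [Finset.sum_add_distrib, Finset.sum_sub_distrib, ← Finset.mul_sum]
        simp
      rw [this, htr, htr2]; ring
    rw [key]
    calc ∑ i, ∑ j ∈ univ.erase i, (N i j)^2
        ≤ ∑ i : Fin k, (100 * ρ^2) := by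
          apply Finset.sum_le_sum
          intro i _
          have h1 : ∑ j ∈ univ.erase i, (N i j)^2 ≤ (∑ j ∈ univ.erase i, |N i j|)^2 := by
            calc ∑ j ∈ univ.erase i, (N i j)^2 = ∑ j ∈ univ.erase i, |N i j|^2 := by
                  simp [sq_abs]
              _ ≤ (∑ j ∈ univ.erase i, |N i j|)^2 := by
                  apply Finset.sum_sq_le_sq_sum_of_nonneg
                  intro j _; positivity
          have h2 : (∑ j ∈ univ.erase i, |N i j|)^2 ≤ (10*ρ)^2 := by
            apply pow_le_pow_left₀ (Finset.sum_nonneg fun j _ => abs_nonneg _) (hoff i)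
          nlinarith
      _ = 100 * ρ^2 * k := by simp [mul_comm]
  -- determinant identity
  have hdetN : (∏ i, s i) * M.det * (∏ i, s i) = ∏ i, ν i := by
    have h := hherm.det_eq_prod_eigenvalues
    simp only [RCLike.ofReal_real_eq_id, id_eq] at h
    have h' : N.det = (∏ i, s i) * M.det * (∏ i, s i) := by
      rw [hN_def, Matrix.det_mul, Matrix.det_mul, Matrix.det_diagonal]
    rw [h'] at h
    exact h
  have hprod1 : (∏ i, s i) * (∏ i, s i) * (∏ i, M i i) = 1 := by
    rw [← Finset.prod_mul_distrib, ← Finset.prod_mul_distrib]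
    apply Finset.prod_eq_one
    intro i _
    have h := Real.mul_self_sqrt (hd i).le
    have hne : Real.sqrt (M i i) ≠ 0 := Real.sqrt_ne_zero'.mpr (hd i)
    field_simp [hs_def]
    simp only [hs_def, inv_pow, Real.sq_sqrt (hd i).le, inv_mul_cancel₀ (hd i).ne']
  have hdet : M.det = (∏ i, M i i) * ∏ i, ν i := by
    have : (∏ i, M i i) * ((∏ i, s i) * M.det * (∏ i, s i)) =
        ((∏ i, s i) * (∏ i, s i) * (∏ i, M i i)) * M.det := by ring
    rw [← hdetN]
    rw [this, hprod1, one_mul]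
  -- logs
  have hlog : Real.log M.det = (∑ i, Real.log (M i i)) + ∑ i, Real.log (ν i) := by
    rw [hdet, Real.log_mul, Real.log_prod, Real.log_prod]
    · exact fun i _ => (hνpos i).ne'
    · exact fun i _ => (hd i).ne'
    · exact (Finset.prod_pos fun i _ => hd i).ne'
    · exact (Finset.prod_pos fun i _ => hνpos i).ne'
  have hzero : ∑ i, (ν i - 1) = 0 := by
    rw [Finset.sum_sub_distrib, htr]; simp
  have hfinal : |∑ i, Real.log (ν i)| ≤ 200 * ρ^2 * k := by
    have : ∑ i, Real.log (ν i) = ∑ i, (Real.log (1 + (ν i - 1)) - (ν i - 1)) := by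
      rw [Finset.sum_sub_distrib, hzero, sub_zero]
      apply Finset.sum_congr rfl
      intro i _
      congr 1
      ring
    rw [this]
    calc |∑ i, (Real.log (1 + (ν i - 1)) - (ν i - 1))|
        ≤ ∑ i, |Real.log (1 + (ν i - 1)) - (ν i - 1)| := Finset.abs_sum_le_sum_abs _ _
      _ ≤ ∑ i, 2 * (ν i - 1)^2 := by
          apply Finset.sum_le_sum
          intro i _
          exact aux_log ((hsmall i).trans (by norm_num))
      _ = 2 * ∑ i, (ν i - 1)^2 := by rw [Finset.mul_sum]
      _ ≤ 2 * (100 * ρ^2 * k) := by linarith [hsumsq]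
      _ = 200 * ρ^2 * k := by ring
  rw [hlog]
  simpa using hfinal
end

section
/- Let L be the Laplacian of a connected weighted graph G and let F be a set of edges with incidence vectors b(e) and weights w_e. Then det⁺(L − ∑_{e∈F} w_e b(e) b(e)ᵀ) = det⁺(L) · det(I_{|F|} − M), where M is the |F|×|F| matrix with M_{ef} = w_e^{1/2} b(e)ᵀ L† b(f) w_f^{1/2}, provided G∖F is connected. -/
open Matrix Finset

/-- The signed incidence vector of an edge `e` with endpoints `ends e`. -/
noncomputable def inc {V E : Type*} [DecidableEq V] (ends : E → V × V) (e : E) : V → ℝ :=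
  fun v => (if v = (ends e).1 then 1 else 0) - (if v = (ends e).2 then 1 else 0)

/-- The weighted graph Laplacian `L = ∑ₑ wₑ b(e) b(e)ᵀ`. -/
noncomputable def lap {V E : Type*} [Fintype V] [Fintype E] [DecidableEq V]
    (ends : E → V × V) (w : E → ℝ) : Matrix V V ℝ :=
  ∑ e : E, w e • vecMulVec (inc ends e) (inc ends e)

/-- Connectivity of the multigraph with vertex set `V` and edge index set `E`. -/
def IsConn {V E : Type*} (ends : E → V × V) : Prop :=
  ∀ a b : V, Relation.ReflTransGen
    (fun x y => ∃ e : E, ends e = (x, y) ∨ ends e = (y, x)) a b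

/-- `det⁺`: the product of the nonzero eigenvalues of a symmetric real matrix. -/
noncomputable def detPlus {n : Type*} [Fintype n] [DecidableEq n] {A : Matrix n n ℝ}
    (hA : A.IsHermitian) : ℝ :=
  ∏ i, if hA.eigenvalues i = 0 then 1 else hA.eigenvalues i

section AuxVecMulVec

lemma mul_vecMulVec' {V W U : Type*} [Fintype V] (A : Matrix W V ℝ) (x : V → ℝ) (y : U → ℝ) :
    A * vecMulVec x y = vecMulVec (A *ᵥ x) y := by
  ext i j
  simp only [mul_apply, vecMulVec_apply, mulVec, dotProduct, Finset.sum_mul, Finset.mul_sum]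
  exact Finset.sum_congr rfl (by intros; ring)

lemma vecMulVec_mul' {V W U : Type*} [Fintype V] (x : W → ℝ) (y : V → ℝ) (A : Matrix V U ℝ) :
    vecMulVec x y * A = vecMulVec x (Aᵀ *ᵥ y) := by
  ext i j
  simp only [mul_apply, vecMulVec_apply, mulVec, dotProduct, Finset.sum_mul, Finset.mul_sum,
    transpose_apply]
  exact Finset.sum_congr rfl (by intros; ring)

lemma vecMulVec_mulVec' {V W : Type*} [Fintype V] (x : W → ℝ) (y v : V → ℝ) :
    vecMulVec x y *ᵥ v = (y ⬝ᵥ v) • x := by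
  ext i
  simp [mulVec, dotProduct, vecMulVec_apply, Finset.mul_sum, mul_comm, mul_assoc, mul_left_comm]

lemma vecMulVec_zero_left' {V W : Type*} (y : V → ℝ) :
    vecMulVec (0 : W → ℝ) y = 0 := by ext i j; simp [vecMulVec_apply]

lemma vecMulVec_zero_right' {V W : Type*} (x : W → ℝ) :
    vecMulVec x (0 : V → ℝ) = 0 := by ext i j; simp [vecMulVec_apply]

lemma vecMulVec_transpose' {V W : Type*} (x : W → ℝ) (y : V → ℝ) :
    (vecMulVec x y)ᵀ = vecMulVec y x := by
  ext i j; simp [vecMulVec_apply, mul_comm]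

lemma sum_mulVec' {V E : Type*} [Fintype V] (s : Finset E) (f : E → Matrix V V ℝ) (v : V → ℝ) :
    (∑ e ∈ s, f e) *ᵥ v = ∑ e ∈ s, f e *ᵥ v := by
  ext i
  simp only [mulVec, dotProduct, Finset.sum_apply, Matrix.sum_apply, Finset.sum_mul]
  rw [Finset.sum_comm]

lemma dotProduct_sum' {V E : Type*} [Fintype V] (s : Finset E) (v : V → ℝ) (f : E → (V → ℝ)) :
    v ⬝ᵥ (∑ e ∈ s, f e) = ∑ e ∈ s, v ⬝ᵥ f e := by
  simp only [dotProduct, Finset.sum_apply, Finset.mul_sum]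
  rw [Finset.sum_comm]

end AuxVecMulVec

section AuxInc
variable {V E : Type*} [Fintype V] [Fintype E] [DecidableEq V]

lemma inc_dotProduct (ends : E → V × V) (e : E) (v : V → ℝ) :
    inc ends e ⬝ᵥ v = v (ends e).1 - v (ends e).2 := by
  simp [inc, dotProduct, sub_mul, ite_mul, Finset.sum_sub_distrib]

lemma inc_sum (ends : E → V × V) (e : E) : inc ends e ⬝ᵥ (fun _ => (1:ℝ)) = 0 := by
  rw [inc_dotProduct]; ring

lemma sum_lap_mulVec_one (ends : E → V × V) (w : E → ℝ) (s : Finset E) :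
    (∑ e ∈ s, w e • vecMulVec (inc ends e) (inc ends e)) *ᵥ (fun _ => (1:ℝ)) = 0 := by
  rw [sum_mulVec']
  refine Finset.sum_eq_zero fun e _ => ?_
  rw [smul_mulVec, vecMulVec_mulVec', inc_sum]
  simp

lemma kernel_dot (ends : E → V × V) (w : E → ℝ) (hw : ∀ e, 0 < w e) (s : Finset E) (v : V → ℝ)
    (h : (∑ e ∈ s, w e • vecMulVec (inc ends e) (inc ends e)) *ᵥ v = 0) :
    ∀ e ∈ s, inc ends e ⬝ᵥ v = 0 := by
  have h0 : v ⬝ᵥ ((∑ e ∈ s, w e • vecMulVec (inc ends e) (inc ends e)) *ᵥ v) = 0 := by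
    rw [h]; simp
  rw [sum_mulVec'] at h0
  simp only [smul_mulVec, vecMulVec_mulVec'] at h0
  have hform : ∀ e ∈ s, v ⬝ᵥ (w e • ((inc ends e ⬝ᵥ v) • inc ends e))
      = w e * (inc ends e ⬝ᵥ v)^2 := by
    intro e _
    rw [dotProduct_smul, dotProduct_smul, dotProduct_comm]
    simp only [smul_eq_mul]; ring
  rw [dotProduct_sum', Finset.sum_congr rfl hform] at h0
  have hz := (Finset.sum_eq_zero_iff_of_nonneg
    (fun e _ => mul_nonneg (hw e).le (sq_nonneg _))).mp h0
  intro e he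
  have := hz e he
  rcases mul_eq_zero.mp this with h' | h'
  · exact absurd h' (hw e).ne'
  · exact pow_eq_zero_iff (by norm_num) |>.mp h'

lemma conn_const {V E' : Type*} (ends' : E' → V × V) (hconn : IsConn ends') (v : V → ℝ)
    (h : ∀ e : E', v (ends' e).1 = v (ends' e).2) (a b : V) : v a = v b := by
  induction hconn a b with
  | refl => rfl
  | tail _ hstep ih =>
      obtain ⟨e, he | he⟩ := hstep
      · rw [ih]; have h' := h e; rw [he] at h'; exact h'
      · rw [ih]; have h' := h e; rw [he] at h'; exact h'.symm

end AuxInc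

section AuxSpectral

lemma detPlus_eq_det_addJ {V : Type*} [Fintype V] [DecidableEq V] [Nonempty V]
    {A : Matrix V V ℝ} (hA : A.IsHermitian)
    (h0 : A *ᵥ (fun _ => 1) = 0)
    (hker : ∀ u : V → ℝ, A *ᵥ u = 0 → ∀ a b, u a = u b) :
    (A + (Fintype.card V : ℝ)⁻¹ • vecMulVec (fun _ => 1) (fun _ => 1)).det = detPlus hA := by
  classical
  set n : ℝ := (Fintype.card V : ℝ) with hn
  have hnpos : 0 < n := by
    have := Fintype.card_pos (α := V); positivity
  set U : Matrix V V ℝ := (hA.eigenvectorUnitary : Matrix V V ℝ) with hU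
  have hU1 : Uᵀ * U = 1 := by
    simpa [Matrix.star_eq_conjTranspose] using
      Matrix.mem_unitaryGroup_iff'.mp (hA.eigenvectorUnitary).2
  have hU2 : U * Uᵀ = 1 := by
    simpa [Matrix.star_eq_conjTranspose] using
      Matrix.mem_unitaryGroup_iff.mp (hA.eigenvectorUnitary).2
  have hdiag : Uᵀ * A * U = diagonal hA.eigenvalues := by
    have := hA.conjStarAlgAut_star_eigenvectorUnitary
    rw [Unitary.conjStarAlgAut_star_apply] at this
    simpa [Matrix.star_eq_conjTranspose] using this
  set v : V → ℝ := Uᵀ *ᵥ (fun _ => 1) with hv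
  have f1 : ∀ i, hA.eigenvalues i * v i = 0 := by
    intro i
    have step : diagonal hA.eigenvalues *ᵥ v = 0 := by
      rw [← hdiag, hv, mulVec_mulVec, mul_assoc, hU2, mul_one, ← mulVec_mulVec, h0, mulVec_zero]
    have := congrFun step i
    simpa [mulVec_diagonal] using this
  have f2 : v ⬝ᵥ v = n := by
    rw [hv, dotProduct_mulVec, vecMul_transpose, mulVec_mulVec, hU2, one_mulVec]
    simp [dotProduct, hn]
  have fconst : ∀ i, hA.eigenvalues i = 0 → ∀ a b,
      hA.eigenvectorBasis i a = hA.eigenvectorBasis i b := by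
    intro i hi
    apply hker
    have := hA.mulVec_eigenvectorBasis i
    rw [hi] at this
    simpa using this
  have fcol : ∀ i j, ∑ k, hA.eigenvectorBasis i k * hA.eigenvectorBasis j k
      = (1 : Matrix V V ℝ) i j := by
    intro i j
    have := congrFun (congrFun hU1 i) j
    rw [← this]
    simp only [mul_apply, transpose_apply, hU]
    exact Finset.sum_congr rfl fun k _ => by
      simp [Matrix.IsHermitian.eigenvectorUnitary_apply]
  have a₀ : V := Classical.arbitrary V
  have fv : ∀ i, v i = ∑ k, hA.eigenvectorBasis i k := by
    intro i
    simp only [hv, mulVec, dotProduct, transpose_apply, hU]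
    exact Finset.sum_congr rfl fun k _ => by
      simp [Matrix.IsHermitian.eigenvectorUnitary_apply]
  have fzero : ∀ i, hA.eigenvalues i = 0 →
      hA.eigenvectorBasis i a₀ ≠ 0 ∧ v i ^ 2 = n := by
    intro i hi
    have hc : ∀ k, hA.eigenvectorBasis i k = hA.eigenvectorBasis i a₀ :=
      fun k => fconst i hi k a₀
    have hne : hA.eigenvectorBasis i a₀ ≠ 0 := by
      intro hz
      have h1 : (∑ k, hA.eigenvectorBasis i k * hA.eigenvectorBasis i k) = 0 := by
        refine Finset.sum_eq_zero fun k _ => by rw [hc k, hz]; ring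
      rw [fcol i i] at h1
      simp at h1
    have hvsum : v i = n * hA.eigenvectorBasis i a₀ := by
      rw [fv i]
      rw [Finset.sum_congr rfl fun k _ => hc k]
      simp [hn, mul_comm]
    have hnorm : n * hA.eigenvectorBasis i a₀ ^ 2 = 1 := by
      have := fcol i i
      rw [Finset.sum_congr rfl fun k _ => by rw [hc k]] at this
      simp only [Matrix.one_apply_eq] at this
      rw [Finset.sum_const] at this
      simpa [hn, sq, mul_comm, mul_assoc] using this
    refine ⟨hne, ?_⟩
    have : v i ^ 2 = n * (n * hA.eigenvectorBasis i a₀ ^ 2) := by rw [hvsum]; ring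
    rw [hnorm] at this
    simpa using this
  have funiq : ∀ i j, hA.eigenvalues i = 0 → hA.eigenvalues j = 0 → i = j := by
    intro i j hi hj
    by_contra hij
    have hz := fcol i j
    rw [Matrix.one_apply_ne hij] at hz
    have hci : ∀ k, hA.eigenvectorBasis i k = hA.eigenvectorBasis i a₀ :=
      fun k => fconst i hi k a₀
    have hcj : ∀ k, hA.eigenvectorBasis j k = hA.eigenvectorBasis j a₀ :=
      fun k => fconst j hj k a₀
    rw [Finset.sum_congr rfl fun k _ => by rw [hci k, hcj k]] at hz
    rw [Finset.sum_const, nsmul_eq_mul] at hz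
    have hne : (Fintype.card V : ℝ) ≠ 0 := by
      have := Fintype.card_pos (α := V); positivity
    have hz' : hA.eigenvectorBasis i a₀ * hA.eigenvectorBasis j a₀ = 0 := by
      rcases mul_eq_zero.mp hz with h | h
      · exact absurd h hne
      · exact h
    rcases mul_eq_zero.mp hz' with h | h
    · exact (fzero i hi).1 h
    · exact (fzero j hj).1 h
  have fex : ∃ i, hA.eigenvalues i = 0 := by
    by_contra hno
    push_neg at hno
    have : ∀ i, v i = 0 := fun i => by
      have := f1 i
      rcases mul_eq_zero.mp this with h | h
      · exact absurd h (hno i)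
      · exact h
    have : v ⬝ᵥ v = 0 := by simp [dotProduct, this]
    rw [f2] at this
    exact hnpos.ne' this
  obtain ⟨i₀, hi₀⟩ := fex
  have hiff : ∀ i, hA.eigenvalues i = 0 ↔ i = i₀ :=
    fun i => ⟨fun h => funiq i i₀ h hi₀, fun h => h ▸ hi₀⟩
  have hJ : Uᵀ * vecMulVec (fun _ => (1:ℝ)) (fun _ => 1) * U = vecMulVec v v := by
    rw [mul_vecMulVec', vecMulVec_mul']
  have key : Uᵀ * (A + n⁻¹ • vecMulVec (fun _ => (1:ℝ)) (fun _ => 1)) * U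
      = diagonal (fun i => if hA.eigenvalues i = 0 then 1 else hA.eigenvalues i) := by
    rw [Matrix.mul_add, Matrix.add_mul, hdiag, Matrix.mul_smul, Matrix.smul_mul, hJ]
    ext i j
    rcases eq_or_ne i j with rfl | hij
    · rcases eq_or_ne i i₀ with rfl | hii
      · have := (fzero i hi₀).2
        simp only [Matrix.add_apply, diagonal_apply_eq, hi₀, Matrix.smul_apply, vecMulVec_apply,
          smul_eq_mul, if_pos hi₀]
        rw [← sq]
        rw [this]
        field_simp
        simp
      · have hne : hA.eigenvalues i ≠ 0 := fun h => hii ((hiff i).mp h)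
        have hvz : v i = 0 := by
          rcases mul_eq_zero.mp (f1 i) with h | h
          · exact absurd h hne
          · exact h
        simp [Matrix.add_apply, diagonal_apply_eq, hvz, if_neg hne, vecMulVec_apply]
    · have hvz : v i = 0 ∨ v j = 0 := by
        rcases eq_or_ne i i₀ with rfl | hii
        · right
          have hne : hA.eigenvalues j ≠ 0 := fun h => hij ((hiff j).mp h).symm
          rcases mul_eq_zero.mp (f1 j) with h | h
          · exact absurd h hne
          · exact h
        · left
          have hne : hA.eigenvalues i ≠ 0 := fun h => hii ((hiff i).mp h)
          rcases mul_eq_zero.mp (f1 i) with h | h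
          · exact absurd h hne
          · exact h
      rcases hvz with h | h <;>
        simp [Matrix.add_apply, diagonal_apply_ne _ hij, vecMulVec_apply, h]
  have hfact : A + n⁻¹ • vecMulVec (fun _ => (1:ℝ)) (fun _ => 1)
      = U * diagonal (fun i => if hA.eigenvalues i = 0 then 1 else hA.eigenvalues i) * Uᵀ := by
    rw [← key]
    calc A + n⁻¹ • vecMulVec (fun _ => (1:ℝ)) (fun _ => 1)
        = (U * Uᵀ) * (A + n⁻¹ • vecMulVec (fun _ => (1:ℝ)) (fun _ => 1)) * (U * Uᵀ) := by
          rw [hU2]; simp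
      _ = U * (Uᵀ * (A + n⁻¹ • vecMulVec (fun _ => (1:ℝ)) (fun _ => 1)) * U) * Uᵀ := by
          noncomm_ring
  rw [hfact, Matrix.det_mul, Matrix.det_mul]
  have hdet1 : U.det * Uᵀ.det = 1 := by rw [← Matrix.det_mul, hU2, Matrix.det_one]
  calc U.det * (diagonal fun i => if hA.eigenvalues i = 0 then 1 else hA.eigenvalues i).det * Uᵀ.det
      = (diagonal fun i => if hA.eigenvalues i = 0 then 1 else hA.eigenvalues i).det
        * (U.det * Uᵀ.det) := by ring
    _ = detPlus hA := by rw [hdet1, mul_one, Matrix.det_diagonal]; rfl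

end AuxSpectral

section AuxMP
variable {V : Type*} [Fintype V] [DecidableEq V] [Nonempty V] (L Ldag : Matrix V V ℝ)

omit [DecidableEq V] [Nonempty V] in
lemma Ldag_one (hLt : Lᵀ = L) (h2 : Ldag * L * Ldag = Ldag) (h3 : (L * Ldag)ᵀ = L * Ldag)
    (hL1 : L *ᵥ (fun _ => 1) = 0) : Ldag *ᵥ (fun _ => (1:ℝ)) = 0 := by
  have hdag_eq : Ldag = Ldag * Ldagᵀ * L := by
    calc Ldag = Ldag * L * Ldag := h2.symm
      _ = Ldag * (L * Ldag) := by rw [Matrix.mul_assoc]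
      _ = Ldag * (L * Ldag)ᵀ := by rw [h3]
      _ = Ldag * (Ldagᵀ * Lᵀ) := by rw [Matrix.transpose_mul]
      _ = Ldag * Ldagᵀ * L := by rw [hLt, Matrix.mul_assoc]
  rw [hdag_eq, ← mulVec_mulVec, hL1, mulVec_zero]

omit [DecidableEq V] [Nonempty V] in
lemma LdagT_one (hLt : Lᵀ = L) (h2 : Ldag * L * Ldag = Ldag) (h4 : (Ldag * L)ᵀ = Ldag * L)
    (hL1 : L *ᵥ (fun _ => 1) = 0) : Ldagᵀ *ᵥ (fun _ => (1:ℝ)) = 0 := by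
  have hdag_eq : Ldag = L * Ldagᵀ * Ldag := by
    calc Ldag = Ldag * L * Ldag := h2.symm
      _ = (Ldag * L)ᵀ * Ldag := by rw [h4]
      _ = Lᵀ * Ldagᵀ * Ldag := by rw [Matrix.transpose_mul]
      _ = L * Ldagᵀ * Ldag := by rw [hLt]
  have hT : Ldagᵀ = Ldagᵀ * Ldag * L := by
    calc Ldagᵀ = (L * Ldagᵀ * Ldag)ᵀ := by rw [← hdag_eq]
      _ = Ldagᵀ * (L * Ldagᵀ)ᵀ := by rw [Matrix.transpose_mul]
      _ = Ldagᵀ * (Ldagᵀᵀ * Lᵀ) := by rw [Matrix.transpose_mul]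
      _ = Ldagᵀ * Ldag * L := by rw [Matrix.transpose_transpose, hLt, Matrix.mul_assoc]
  rw [hT, ← mulVec_mulVec, hL1, mulVec_zero]

lemma LLdag_eq (hLt : Lᵀ = L) (h1 : L * Ldag * L = L) (h2 : Ldag * L * Ldag = Ldag)
    (h3 : (L * Ldag)ᵀ = L * Ldag)
    (hL1 : L *ᵥ (fun _ => 1) = 0)
    (hker : ∀ v : V → ℝ, L *ᵥ v = 0 → ∀ a b, v a = v b) :
    L * Ldag = 1 - (Fintype.card V : ℝ)⁻¹ • vecMulVec (fun _ => 1) (fun _ => 1) := by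
  classical
  have hnne : ((Fintype.card V : ℝ)) ≠ 0 := by
    have := Fintype.card_pos (α := V); positivity
  set J : Matrix V V ℝ := vecMulVec (fun _ => 1) (fun _ => 1) with hJdef
  set N : Matrix V V ℝ := L * Ldag - 1 + (Fintype.card V : ℝ)⁻¹ • J with hNdef
  have hJt : Jᵀ = J := by rw [hJdef, vecMulVec_transpose']
  have hNt : Nᵀ = N := by
    rw [hNdef, transpose_add, transpose_sub, h3, transpose_one, transpose_smul, hJt]
  have hJL : J * L = 0 := by
    rw [hJdef, vecMulVec_mul', hLt, hL1, vecMulVec_zero_right']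
  have hNL : N * L = 0 := by
    rw [hNdef, Matrix.add_mul, Matrix.sub_mul, h1, Matrix.one_mul, Matrix.smul_mul, hJL]
    simp
  have hLN : L * N = 0 := by
    have := congrArg Matrix.transpose hNL
    rwa [Matrix.transpose_mul, hNt, hLt, Matrix.transpose_zero] at this
  have hcolconst : ∀ j a b, N a j = N b j := by
    intro j a b
    refine hker (fun i => N i j) ?_ a b
    have : L *ᵥ (fun i => N i j) = fun i => (L * N) i j := by
      ext i; simp [mulVec, mul_apply, dotProduct]
    rw [this, hLN]
    rfl
  have hsym : ∀ i j, N i j = N j i := fun i j => by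
    simpa using congrFun (congrFun hNt j) i
  have hconst : ∀ i j, N i j = N i i := by
    intro i j
    rw [hsym i j, hcolconst i j i]
  have hrow : N *ᵥ (fun _ => (1:ℝ)) = 0 := by
    have hLLd1 : (L * Ldag) *ᵥ (fun _ => (1:ℝ)) = 0 := by
      rw [← mulVec_mulVec, Ldag_one L Ldag hLt h2 h3 hL1, mulVec_zero]
    have hJ1 : J *ᵥ (fun _ => (1:ℝ)) = (Fintype.card V : ℝ) • (fun _ => (1:ℝ)) := by
      rw [hJdef, vecMulVec_mulVec']
      congr 1
      simp [dotProduct]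
    rw [hNdef, Matrix.add_mulVec, Matrix.sub_mulVec, smul_mulVec, hJ1, hLLd1,
      Matrix.one_mulVec]
    rw [smul_smul, inv_mul_cancel₀ hnne, one_smul]
    abel
  have hNii : ∀ i, N i i = 0 := by
    intro i
    have h0 := congrFun hrow i
    have hsum : ∑ j, N i j * 1 = 0 := h0
    rw [Finset.sum_congr rfl (fun j _ => by rw [mul_one, hconst i j])] at hsum
    rw [Finset.sum_const, nsmul_eq_mul] at hsum
    rcases mul_eq_zero.mp hsum with h | h
    · exact absurd h hnne
    · exact h
  have hN0 : N = 0 := by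
    ext i j
    rw [hconst i j, hNii i]
    rfl
  have : L * Ldag - (1 - (Fintype.card V : ℝ)⁻¹ • J) = N := by rw [hNdef]; abel
  rw [← sub_eq_zero, this, hN0]

end AuxMP

/-- For a connected weighted graph `G` with Laplacian `L`, and a set `F` of edges whose
removal keeps the graph connected,
`det⁺(L - ∑_{e ∈ F} wₑ b(e) b(e)ᵀ) = det⁺(L) ⬝ det(I - M)` where `M` is the `F × F`
matrix with `M_{ef} = wₑ^{1/2} b(e)ᵀ L† b(f) w_f^{1/2}`. -/
theorem detPlus_remove_edge_subset {V E : Type*} [Fintype V] [Fintype E] [DecidableEq V]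
    [DecidableEq E] [Nonempty V]
    (ends : E → V × V) (w : E → ℝ) (Ldag : Matrix V V ℝ) (F : Finset E)
    (hw : ∀ e, 0 < w e) (hconn : IsConn ends)
    (hconn' : IsConn (fun e : {e : E // e ∉ F} => ends e.1))
    (h1 : lap ends w * Ldag * lap ends w = lap ends w)
    (h2 : Ldag * lap ends w * Ldag = Ldag)
    (h3 : (lap ends w * Ldag)ᵀ = lap ends w * Ldag)
    (h4 : (Ldag * lap ends w)ᵀ = Ldag * lap ends w)
    (hL : (lap ends w).IsHermitian)
    (hL' : (lap ends w - ∑ e ∈ F, w e • vecMulVec (inc ends e) (inc ends e)).IsHermitian)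
    (M : Matrix F F ℝ)
    (hM : ∀ e f : F, M e f =
      Real.sqrt (w e) * (inc ends e ⬝ᵥ Ldag *ᵥ inc ends f) * Real.sqrt (w f)) :
    detPlus hL' = detPlus hL * (1 - M).det := by
  classical
  have hnne : ((Fintype.card V : ℝ)) ≠ 0 := by
    have := Fintype.card_pos (α := V); positivity
  set L : Matrix V V ℝ := lap ends w with hLdef
  set S : Matrix V V ℝ := ∑ e ∈ F, w e • vecMulVec (inc ends e) (inc ends e) with hSdef
  have hLt : Lᵀ = L := hL
  have hLsum : L = ∑ e ∈ Finset.univ, w e • vecMulVec (inc ends e) (inc ends e) := rfl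
  have hL'sum : L - S = ∑ e ∈ Fᶜ, w e • vecMulVec (inc ends e) (inc ends e) := by
    rw [hLdef, hSdef, lap, ← Finset.sum_compl_add_sum F]
    exact add_sub_cancel_right _ _
  have hL1 : L *ᵥ (fun _ => (1:ℝ)) = 0 := by
    rw [hLsum]; exact sum_lap_mulVec_one ends w _
  have hL'1 : (L - S) *ᵥ (fun _ => (1:ℝ)) = 0 := by
    rw [hL'sum]; exact sum_lap_mulVec_one ends w _
  have hkerL : ∀ v : V → ℝ, L *ᵥ v = 0 → ∀ a b, v a = v b := by
    intro v hv
    have hd := kernel_dot ends w hw Finset.univ v (by rw [← hLsum]; exact hv)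
    refine conn_const ends hconn v (fun e => ?_)
    have := hd e (Finset.mem_univ e)
    rw [inc_dotProduct] at this
    exact sub_eq_zero.mp this
  have hkerL' : ∀ v : V → ℝ, (L - S) *ᵥ v = 0 → ∀ a b, v a = v b := by
    intro v hv
    have hd := kernel_dot ends w hw Fᶜ v (by rw [← hL'sum]; exact hv)
    refine conn_const (fun e : {e : E // e ∉ F} => ends e.1) hconn' v (fun e => ?_)
    have := hd e.1 (Finset.mem_compl.mpr e.2)
    rw [inc_dotProduct] at this
    exact sub_eq_zero.mp this
  have e2 : detPlus hL = (L + (Fintype.card V : ℝ)⁻¹ •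
      vecMulVec (fun _ => 1) (fun _ => 1)).det := (detPlus_eq_det_addJ hL hL1 hkerL).symm
  have e1 : detPlus hL' = ((L - S) + (Fintype.card V : ℝ)⁻¹ •
      vecMulVec (fun _ => 1) (fun _ => 1)).det := (detPlus_eq_det_addJ hL' hL'1 hkerL').symm
  -- the inverse identity
  have key : L * Ldag = 1 - (Fintype.card V : ℝ)⁻¹ • vecMulVec (fun _ => 1) (fun _ => 1) :=
    LLdag_eq L Ldag hLt h1 h2 h3 hL1 hkerL
  have hdagT1 : Ldagᵀ *ᵥ (fun _ => (1:ℝ)) = 0 := LdagT_one L Ldag hLt h2 h4 hL1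
  have hLJ : L * vecMulVec (fun _ => (1:ℝ)) (fun _ => 1) = 0 := by
    rw [mul_vecMulVec', hL1, vecMulVec_zero_left']
  have hJdag : vecMulVec (fun _ => (1:ℝ)) (fun _ => 1) * Ldag = 0 := by
    rw [vecMulVec_mul', hdagT1, vecMulVec_zero_right']
  have hJJ : vecMulVec (fun _ : V => (1:ℝ)) (fun _ : V => 1) *
        vecMulVec (fun _ : V => (1:ℝ)) (fun _ : V => 1)
      = (Fintype.card V : ℝ) • vecMulVec (fun _ : V => (1:ℝ)) (fun _ : V => 1) := by
    rw [mul_vecMulVec', vecMulVec_mulVec']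
    have : (fun _ : V => (1:ℝ)) ⬝ᵥ (fun _ : V => (1:ℝ)) = (Fintype.card V : ℝ) := by
      simp [dotProduct]
    rw [this]
    ext i j
    simp [vecMulVec_apply]
  have hinv : (L + (Fintype.card V : ℝ)⁻¹ • vecMulVec (fun _ => 1) (fun _ => 1)) *
      (Ldag + (Fintype.card V : ℝ)⁻¹ • vecMulVec (fun _ => 1) (fun _ => 1)) = 1 := by
    rw [Matrix.add_mul, Matrix.mul_add, Matrix.mul_add, key, Matrix.mul_smul, hLJ,
      Matrix.smul_mul, hJdag, Matrix.smul_mul, Matrix.mul_smul, hJJ]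
    rw [smul_smul, smul_smul, mul_assoc, inv_mul_cancel₀ hnne, mul_one]
    simp
  -- the C matrix
  set C : Matrix V {e : E // e ∈ F} ℝ :=
    Matrix.of (fun i e => Real.sqrt (w e.1) * inc ends e.1 i) with hCdef
  have hCC : C * Cᵀ = S := by
    ext i j
    rw [hSdef, Matrix.sum_apply]
    rw [mul_apply]
    rw [← Finset.sum_coe_sort F (fun e => (w e • vecMulVec (inc ends e) (inc ends e)) i j)]
    refine Finset.sum_congr rfl fun e _ => ?_
    simp only [hCdef, Matrix.of_apply, transpose_apply, Matrix.smul_apply, vecMulVec_apply, smul_eq_mul]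
    have hss := Real.mul_self_sqrt (hw e.1).le
    linear_combination (inc ends e.1 i * inc ends e.1 j) * hss
  have hC1 : Cᵀ *ᵥ (fun _ => (1:ℝ)) = 0 := by
    ext e
    have : (Cᵀ *ᵥ (fun _ => (1:ℝ))) e = Real.sqrt (w e.1) * (inc ends e.1 ⬝ᵥ (fun _ => (1:ℝ))) := by
      simp only [mulVec, dotProduct, transpose_apply, hCdef, Matrix.of_apply, Finset.mul_sum]
      exact Finset.sum_congr rfl fun i _ => by ring
    rw [this, inc_sum]
    simp
  -- factorization
  have hfactor : (L - S) + (Fintype.card V : ℝ)⁻¹ • vecMulVec (fun _ => (1:ℝ)) (fun _ => 1)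
      = (L + (Fintype.card V : ℝ)⁻¹ • vecMulVec (fun _ => (1:ℝ)) (fun _ => 1)) *
        (1 - (Ldag + (Fintype.card V : ℝ)⁻¹ • vecMulVec (fun _ => (1:ℝ)) (fun _ => 1)) *
          (C * Cᵀ)) := by
    rw [Matrix.mul_sub, Matrix.mul_one, ← Matrix.mul_assoc, hinv, Matrix.one_mul, hCC]
    abel
  have hJC0 : vecMulVec (fun _ : V => (1:ℝ)) (fun _ : V => 1) * C = 0 := by
    rw [vecMulVec_mul', hC1, vecMulVec_zero_right']
  have hXC : (Ldag + (Fintype.card V : ℝ)⁻¹ • vecMulVec (fun _ : V => (1:ℝ)) (fun _ : V => 1))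
      * C = Ldag * C := by
    rw [Matrix.add_mul, Matrix.smul_mul, hJC0, smul_zero, add_zero]
  have hCMC : Cᵀ * ((Ldag + (Fintype.card V : ℝ)⁻¹ •
      vecMulVec (fun _ => (1:ℝ)) (fun _ => 1)) * C) = M := by
    rw [hXC]
    ext e f
    rw [hM e f]
    simp only [mul_apply, transpose_apply, hCdef, Matrix.of_apply, dotProduct, mulVec,
      Finset.mul_sum, Finset.sum_mul]
    refine Finset.sum_congr rfl fun k _ => ?_
    refine Finset.sum_congr rfl fun j _ => ?_
    ring
  rw [e1, e2, hfactor, Matrix.det_mul]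
  congr 1
  rw [← Matrix.mul_assoc, Matrix.det_one_sub_mul_comm, hCMC]
end

section
/- Let (x_f)_{f∈F} be a family of reals with x_f ∈ [0,1] and let M be a symmetric F×F matrix with zero diagonal satisfying ∑_{e≠f}|M_{ef}| ≤ ρ for all f ∈ F. Let (r_f)_{f∈F} be independent Rademacher (±1 uniform) random variables and define Z = ∑_{e≠f} r_e r_f x_e^{1/2} x_f^{1/2} M_{ef}. Then E[Z] = 0 and E[Z²] ≤ 2|F|ρ². -/
open Finset MeasureTheory ProbabilityTheory

/-- Let `(x_f)_{f ∈ F}` lie in `[0,1]` and `M` be a symmetric `F × F` matrix with zero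
diagonal and off-diagonal row `ℓ1` norms at most `ρ`. If `(r_f)` are independent Rademacher
variables and `Z = ∑_{e ≠ f} r_e r_f x_e^{1/2} x_f^{1/2} M_{ef}`, then `E[Z] = 0` and
`E[Z²] ≤ 2 |F| ρ²`. -/
theorem rademacher_chaos_bound {F : Type*} [Fintype F] [DecidableEq F]
    {Ω : Type*} [MeasurableSpace Ω] (μ : Measure Ω) [IsProbabilityMeasure μ]
    (r : F → Ω → ℝ) (x : F → ℝ) (M : F → F → ℝ) (ρ : ℝ)
    (hx : ∀ f, x f ∈ Set.Icc (0 : ℝ) 1)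
    (hsymm : ∀ e f, M e f = M f e) (hdiag : ∀ f, M f f = 0)
    (hrow : ∀ f : F, ∑ e ∈ univ.filter (fun e => e ≠ f), |M e f| ≤ ρ)
    (hmeas : ∀ f, Measurable (r f))
    (hindep : iIndepFun r μ)
    (hsign : ∀ f, μ {ω | r f ω = 1} = 1 / 2 ∧ μ {ω | r f ω = -1} = 1 / 2)
    (Z : Ω → ℝ)
    (hZ : ∀ ω, Z ω = ∑ e : F, ∑ f ∈ univ.filter (fun f => f ≠ e),
      r e ω * r f ω * Real.sqrt (x e) * Real.sqrt (x f) * M e f) :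
    (∫ ω, Z ω ∂μ) = 0 ∧ (∫ ω, (Z ω) ^ 2 ∂μ) ≤ 2 * (Fintype.card F : ℝ) * ρ ^ 2 := by
  classical
  -- each r f is a.e. ±1
  have hpm : ∀ f, ∀ᵐ ω ∂μ, r f ω = 1 ∨ r f ω = -1 := by
    intro f
    have hA : MeasurableSet {ω | r f ω = 1} := (hmeas f) (measurableSet_singleton 1)
    have hB : MeasurableSet {ω | r f ω = -1} := (hmeas f) (measurableSet_singleton (-1))
    have hd : Disjoint {ω | r f ω = 1} {ω | r f ω = -1} := by
      rw [Set.disjoint_left]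
      intro ω h1 h2
      simp only [Set.mem_setOf_eq] at h1 h2
      rw [h1] at h2; norm_num at h2
    have hU : μ ({ω | r f ω = 1} ∪ {ω | r f ω = -1}) = 1 := by
      rw [measure_union hd hB, (hsign f).1, (hsign f).2, ENNReal.add_halves]
    have hz : μ ({ω | r f ω = 1} ∪ {ω | r f ω = -1})ᶜ = 0 := by
      rw [measure_compl (hA.union hB) (measure_ne_top μ _), hU, measure_univ, tsub_self]
    have hset : {ω | ¬(r f ω = 1 ∨ r f ω = -1)} =
        ({ω | r f ω = 1} ∪ {ω | r f ω = -1})ᶜ := by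
      ext ω; simp [not_or]
    rw [ae_iff, hset]; exact hz
  -- squares are a.e. 1
  have hsq : ∀ f, (fun ω => r f ω * r f ω) =ᵐ[μ] (fun _ => (1 : ℝ)) := by
    intro f
    filter_upwards [hpm f] with ω h
    rcases h with h | h <;> rw [h] <;> norm_num
  -- integrability
  have hint : ∀ f, Integrable (r f) μ := by
    intro f
    refine (integrable_const (1 : ℝ)).mono' (hmeas f).aestronglyMeasurable ?_
    filter_upwards [hpm f] with ω h
    rcases h with h | h <;> rw [h] <;> norm_num
  have hint2 : ∀ e f, Integrable (fun ω => r e ω * r f ω) μ := by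
    intro e f
    refine (integrable_const (1 : ℝ)).mono'
      ((hmeas e).mul (hmeas f)).aestronglyMeasurable ?_
    filter_upwards [hpm e, hpm f] with ω he hf
    rcases he with he | he <;> rcases hf with hf | hf <;> rw [he, hf] <;> norm_num
  have hint4 : ∀ e f g h, Integrable (fun ω => (r e ω * r f ω) * (r g ω * r h ω)) μ := by
    intro e f g h
    refine (integrable_const (1 : ℝ)).mono'
      (((hmeas e).mul (hmeas f)).mul ((hmeas g).mul (hmeas h))).aestronglyMeasurable ?_
    filter_upwards [hpm e, hpm f, hpm g, hpm h] with ω he hf hg hh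
    rcases he with he | he <;> rcases hf with hf | hf <;> rcases hg with hg | hg <;>
      rcases hh with hh | hh <;> rw [he, hf, hg, hh] <;> norm_num
  -- mean of each r f is 0
  have hmean : ∀ f, ∫ ω, r f ω ∂μ = 0 := by
    intro f
    have hA : MeasurableSet {ω | r f ω = 1} := (hmeas f) (measurableSet_singleton 1)
    have hB : MeasurableSet {ω | r f ω = -1} := (hmeas f) (measurableSet_singleton (-1))
    have hae : r f =ᵐ[μ] fun ω =>
        Set.indicator {ω | r f ω = 1} (fun _ => (1 : ℝ)) ω -
        Set.indicator {ω | r f ω = -1} (fun _ => (1 : ℝ)) ω := by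
      filter_upwards [hpm f] with ω h
      rcases h with h | h <;>
        · simp only [Set.indicator_apply, Set.mem_setOf_eq, h]; norm_num
    rw [integral_congr_ae hae, integral_sub ((integrable_const (1:ℝ)).indicator hA)
      ((integrable_const (1:ℝ)).indicator hB),
      integral_indicator_const (1:ℝ) hA, integral_indicator_const (1:ℝ) hB,
      measureReal_def, measureReal_def, (hsign f).1, (hsign f).2]
    simp
  -- expectation of products of pairs
  have hpair : ∀ e f, e ≠ f → ∫ ω, r e ω * r f ω ∂μ = 0 := by
    intro e f hef
    have := (hindep.indepFun hef).integral_mul_eq_mul_integral (hint e).aestronglyMeasurable (hint f).aestronglyMeasurable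
    have h2 : ∫ ω, r e ω * r f ω ∂μ = (∫ ω, r e ω ∂μ) * ∫ ω, r f ω ∂μ := this
    rw [h2, hmean e, hmean f, mul_zero]
  -- expectation of quadruple products
  have hquad : ∀ e f g h : F, e ≠ f → g ≠ h →
      ∫ ω, (r e ω * r f ω) * (r g ω * r h ω) ∂μ =
        (if (g = e ∧ h = f) ∨ (g = f ∧ h = e) then (1 : ℝ) else 0) := by
    intro e f g h hef hgh
    by_cases hge : g = e
    · subst hge
      by_cases hhf : h = f
      · subst hhf
        have hae : (fun ω => (r g ω * r h ω) * (r g ω * r h ω)) =ᵐ[μ]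
            (fun _ => (1 : ℝ)) := by
          filter_upwards [hsq g, hsq h] with ω h1 h2
          calc (r g ω * r h ω) * (r g ω * r h ω)
              = (r g ω * r g ω) * (r h ω * r h ω) := by ring
            _ = 1 := by rw [h1, h2, one_mul]
        rw [integral_congr_ae hae]
        simp
      · have hae : (fun ω => (r g ω * r f ω) * (r g ω * r h ω)) =ᵐ[μ]
            (fun ω => r f ω * r h ω) := by
          filter_upwards [hsq g] with ω h1
          calc (r g ω * r f ω) * (r g ω * r h ω)
              = (r g ω * r g ω) * (r f ω * r h ω) := by ring
            _ = r f ω * r h ω := by rw [h1, one_mul]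
        rw [integral_congr_ae hae, hpair f h (fun hc => hhf hc.symm)]
        simp [hhf, hef]
    · by_cases hgf : g = f
      · subst hgf
        by_cases hhe : h = e
        · subst hhe
          have hae : (fun ω => (r h ω * r g ω) * (r g ω * r h ω)) =ᵐ[μ]
              (fun _ => (1 : ℝ)) := by
            filter_upwards [hsq g, hsq h] with ω h1 h2
            calc (r h ω * r g ω) * (r g ω * r h ω)
                = (r g ω * r g ω) * (r h ω * r h ω) := by ring
              _ = 1 := by rw [h1, h2, one_mul]
          rw [integral_congr_ae hae]
          simp
        · have hae : (fun ω => (r e ω * r g ω) * (r g ω * r h ω)) =ᵐ[μ]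
              (fun ω => r e ω * r h ω) := by
            filter_upwards [hsq g] with ω h1
            calc (r e ω * r g ω) * (r g ω * r h ω)
                = (r g ω * r g ω) * (r e ω * r h ω) := by ring
              _ = r e ω * r h ω := by rw [h1, one_mul]
          rw [integral_congr_ae hae, hpair e h (fun hc => hhe hc.symm)]
          simp [hge, hhe]
      · by_cases hhe : h = e
        · subst hhe
          have hae : (fun ω => (r h ω * r f ω) * (r g ω * r h ω)) =ᵐ[μ]
              (fun ω => r f ω * r g ω) := by
            filter_upwards [hsq h] with ω h1
            calc (r h ω * r f ω) * (r g ω * r h ω)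
                = (r h ω * r h ω) * (r f ω * r g ω) := by ring
              _ = r f ω * r g ω := by rw [h1, one_mul]
          rw [integral_congr_ae hae, hpair f g (fun hc => hgf hc.symm)]
          simp [hge, hgf]
        · by_cases hhf : h = f
          · subst hhf
            have hae : (fun ω => (r e ω * r h ω) * (r g ω * r h ω)) =ᵐ[μ]
                (fun ω => r e ω * r g ω) := by
              filter_upwards [hsq h] with ω h1
              calc (r e ω * r h ω) * (r g ω * r h ω)
                  = (r h ω * r h ω) * (r e ω * r g ω) := by ring
                _ = r e ω * r g ω := by rw [h1, one_mul]
            rw [integral_congr_ae hae, hpair e g (fun hc => hge hc.symm)]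
            simp [hge, hgf]
          · -- all four distinct
            have hI : IndepFun (r e * r f) (r g * r h) μ :=
              hindep.indepFun_mul_mul hmeas e f g h (fun hc => hge hc.symm)
                (fun hc => hhe hc.symm) (fun hc => hgf hc.symm) (fun hc => hhf hc.symm)
            have := hI.integral_mul_eq_mul_integral (hint2 e f).aestronglyMeasurable (hint2 g h).aestronglyMeasurable
            have h2 : ∫ ω, (r e ω * r f ω) * (r g ω * r h ω) ∂μ =
                (∫ ω, r e ω * r f ω ∂μ) * ∫ ω, r g ω * r h ω ∂μ := this
            rw [h2, hpair e f hef, zero_mul]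
            simp [hge, hgf]
  -- abbreviation for the coefficients
  set c : F → F → ℝ := fun e f => Real.sqrt (x e) * Real.sqrt (x f) * M e f with hc
  have hcsymm : ∀ e f, c e f = c f e := by
    intro e f; simp only [hc]; rw [hsymm e f]; ring
  have hI1 : ∀ e f : F, Integrable
      (fun ω => r e ω * r f ω * Real.sqrt (x e) * Real.sqrt (x f) * M e f) μ :=
    fun e f => (((hint2 e f).mul_const _).mul_const _).mul_const _
  constructor
  · -- E[Z] = 0
    simp only [hZ]
    rw [integral_finset_sum _ (fun e _ => integrable_finset_sum _ fun f _ => hI1 e f)]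
    refine Finset.sum_eq_zero fun e _ => ?_
    rw [integral_finset_sum _ (fun f _ => hI1 e f)]
    refine Finset.sum_eq_zero fun f hf => ?_
    have hef : e ≠ f := fun hc => (Finset.mem_filter.mp hf).2 hc.symm
    rw [integral_mul_const, integral_mul_const, integral_mul_const, hpair e f hef,
      zero_mul, zero_mul, zero_mul]
  · -- E[Z²] ≤ 2 |F| ρ²
    have hZsq : ∀ ω, (Z ω) ^ 2 = ∑ e : F, ∑ f ∈ univ.filter (fun f => f ≠ e),
        ∑ g : F, ∑ h ∈ univ.filter (fun h => h ≠ g),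
          ((r e ω * r f ω) * (r g ω * r h ω)) * (c e f * c g h) := by
      intro ω
      rw [hZ, sq, Finset.sum_mul_sum]
      refine Finset.sum_congr rfl fun e _ => ?_
      rw [Finset.sum_comm]
      refine Finset.sum_congr rfl fun f _ => ?_
      rw [Finset.sum_mul_sum]
      refine Finset.sum_congr rfl fun g _ => ?_
      refine Finset.sum_congr rfl fun h _ => ?_
      simp only [hc]; ring
    have hIq : ∀ e f g h : F, Integrable
        (fun ω => ((r e ω * r f ω) * (r g ω * r h ω)) * (c e f * c g h)) μ :=
      fun e f g h => (hint4 e f g h).mul_const _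
    have key : ∫ ω, (Z ω) ^ 2 ∂μ =
        ∑ e : F, ∑ f ∈ univ.filter (fun f => f ≠ e), 2 * (c e f) ^ 2 := by
      simp only [hZsq]
      rw [integral_finset_sum _ (fun e _ => integrable_finset_sum _ fun f _ =>
        integrable_finset_sum _ fun g _ => integrable_finset_sum _ fun h _ => hIq e f g h)]
      refine Finset.sum_congr rfl fun e _ => ?_
      rw [integral_finset_sum _ (fun f _ =>
        integrable_finset_sum _ fun g _ => integrable_finset_sum _ fun h _ => hIq e f g h)]
      refine Finset.sum_congr rfl fun f hf => ?_
      have hfe : f ≠ e := (Finset.mem_filter.mp hf).2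
      have hef : e ≠ f := fun hc => hfe hc.symm
      rw [integral_finset_sum _ (fun g _ => integrable_finset_sum _ fun h _ => hIq e f g h)]
      have step : ∀ g : F, ∫ ω, ∑ h ∈ univ.filter (fun h => h ≠ g),
          ((r e ω * r f ω) * (r g ω * r h ω)) * (c e f * c g h) ∂μ =
          (if g = e then c e f * c e f else if g = f then c e f * c f e else 0) := by
        intro g
        rw [integral_finset_sum _ (fun h _ => hIq e f g h)]
        have heval : ∀ h ∈ univ.filter (fun h => h ≠ g),
            ∫ ω, ((r e ω * r f ω) * (r g ω * r h ω)) * (c e f * c g h) ∂μ =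
            (if (g = e ∧ h = f) ∨ (g = f ∧ h = e) then (1:ℝ) else 0) * (c e f * c g h) := by
          intro h hh
          have hhg : h ≠ g := (Finset.mem_filter.mp hh).2
          rw [integral_mul_const, hquad e f g h hef (fun hc => hhg hc.symm)]
        rw [Finset.sum_congr rfl heval]
        by_cases hge : g = e
        · have h1 : ∀ h ∈ univ.filter (fun h => h ≠ g),
              (if (g = e ∧ h = f) ∨ (g = f ∧ h = e) then (1:ℝ) else 0) * (c e f * c g h)
              = if h = f then c e f * c g h else 0 := by
            intro h hh
            by_cases hhf : h = f <;> simp [hge, hhf, hef]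
          rw [Finset.sum_congr rfl h1, Finset.sum_ite_eq' _ f _]
          simp [hge, hfe]
        · by_cases hgf : g = f
          · have h1 : ∀ h ∈ univ.filter (fun h => h ≠ g),
                (if (g = e ∧ h = f) ∨ (g = f ∧ h = e) then (1:ℝ) else 0) * (c e f * c g h)
                = if h = e then c e f * c g h else 0 := by
              intro h hh
              by_cases hhe : h = e <;> simp [hgf, hhe, hge, hfe]
            have hegne : e ≠ g := fun hc => hef (hc.trans hgf)
            rw [Finset.sum_congr rfl h1, Finset.sum_ite_eq' _ e _]
            simp [hgf, hge, hef, hegne, hfe]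
          · have h1 : ∀ h ∈ univ.filter (fun h => h ≠ g),
                (if (g = e ∧ h = f) ∨ (g = f ∧ h = e) then (1:ℝ) else 0) * (c e f * c g h)
                = 0 := by
              intro h hh
              simp [hge, hgf]
            rw [Finset.sum_congr rfl h1, Finset.sum_const, smul_zero]
            simp [hge, hgf]
      rw [Finset.sum_congr rfl (fun g _ => step g)]
      have h2 : ∀ g : F,
          (if g = e then c e f * c e f else if g = f then c e f * c f e else 0) =
          (if g = e then c e f * c e f else 0) + (if g = f then c e f * c f e else 0) := by
        intro g
        by_cases hge : g = e
        · subst hge; simp [hef, hfe]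
        · by_cases hgf : g = f <;> simp [hge, hgf, hfe]
      rw [Finset.sum_congr rfl (fun g _ => h2 g), Finset.sum_add_distrib,
        Finset.sum_ite_eq' _ e _, Finset.sum_ite_eq' _ f _]
      simp only [Finset.mem_univ, if_true]
      rw [← hcsymm e f]
      ring
    rw [key]
    -- now the deterministic bound
    have hcb : ∀ e : F, ∑ f ∈ univ.filter (fun f => f ≠ e), 2 * (c e f) ^ 2 ≤ 2 * ρ ^ 2 := by
      intro e
      rw [← Finset.mul_sum]
      have hS : (0:ℝ) ≤ ∑ f ∈ univ.filter (fun f => f ≠ e), |M e f| :=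
        Finset.sum_nonneg fun f _ => abs_nonneg _
      have hSρ : ∑ f ∈ univ.filter (fun f => f ≠ e), |M e f| ≤ ρ := by
        have := hrow e
        calc ∑ f ∈ univ.filter (fun f => f ≠ e), |M e f|
            = ∑ f ∈ univ.filter (fun f => f ≠ e), |M f e| := by
              refine Finset.sum_congr rfl fun f _ => by rw [hsymm]
          _ ≤ ρ := hrow e
      have hterm : ∀ f ∈ univ.filter (fun f => f ≠ e), (c e f) ^ 2 ≤
          |M e f| * (∑ f' ∈ univ.filter (fun f' => f' ≠ e), |M e f'|) := by
        intro f hf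
        have hx1 := hx e
        have hx2 := hx f
        have hcsq : (c e f) ^ 2 = x e * x f * (M e f) ^ 2 := by
          simp only [hc]
          rw [mul_pow, mul_pow, Real.sq_sqrt hx1.1, Real.sq_sqrt hx2.1]
        rw [hcsq]
        have h1 : x e * x f * (M e f) ^ 2 ≤ (M e f) ^ 2 := by
          have hxy : x e * x f ≤ 1 := by nlinarith [hx1.1, hx1.2, hx2.1, hx2.2]
          nlinarith [sq_nonneg (M e f), hxy, mul_nonneg hx1.1 hx2.1]
        have h2 : (M e f) ^ 2 = |M e f| * |M e f| := by
          rw [← sq_abs, sq]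
        have h3 : |M e f| ≤ ∑ f' ∈ univ.filter (fun f' => f' ≠ e), |M e f'| :=
          Finset.single_le_sum (fun f' _ => abs_nonneg (M e f')) hf
        calc x e * x f * (M e f) ^ 2 ≤ (M e f) ^ 2 := h1
          _ = |M e f| * |M e f| := h2
          _ ≤ |M e f| * (∑ f' ∈ univ.filter (fun f' => f' ≠ e), |M e f'|) :=
              mul_le_mul_of_nonneg_left h3 (abs_nonneg _)
      have hsum : ∑ f ∈ univ.filter (fun f => f ≠ e), (c e f) ^ 2 ≤ ρ ^ 2 := by
        calc ∑ f ∈ univ.filter (fun f => f ≠ e), (c e f) ^ 2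
            ≤ ∑ f ∈ univ.filter (fun f => f ≠ e),
              |M e f| * (∑ f' ∈ univ.filter (fun f' => f' ≠ e), |M e f'|) :=
              Finset.sum_le_sum hterm
          _ = (∑ f ∈ univ.filter (fun f => f ≠ e), |M e f|) *
              (∑ f' ∈ univ.filter (fun f' => f' ≠ e), |M e f'|) := by
              rw [← Finset.sum_mul]
          _ ≤ ρ * ρ := mul_le_mul hSρ hSρ hS (le_trans hS hSρ)
          _ = ρ ^ 2 := (sq ρ).symm
      nlinarith
    calc ∑ e : F, ∑ f ∈ univ.filter (fun f => f ≠ e), 2 * (c e f) ^ 2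
        ≤ ∑ _e : F, 2 * ρ ^ 2 := Finset.sum_le_sum fun e _ => hcb e
      _ = (Fintype.card F : ℝ) * (2 * ρ ^ 2) := by
          rw [Finset.sum_const, Finset.card_univ, nsmul_eq_mul]
      _ = 2 * (Fintype.card F : ℝ) * ρ ^ 2 := by ring
end

section
/- Let v be a vertex of degree exactly 2 in a connected weighted multigraph G, with incident edges e₁, e₂ of weights w₁, w₂ joining v to (not necessarily distinct) vertices a, b. Let G_new be the graph obtained by deleting v and adding an edge between a and b of weight w₁w₂/(w₁+w₂). Then 𝒯(G) = (w₁ + w₂) · 𝒯(G_new). -/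
open Matrix Finset

/-- Connectivity of `V` using only the edges in the set `S`. -/
def EdgeConn {V E : Type*} (ends : E → V × V) (S : Finset E) : Prop :=
  ∀ a b : V, Relation.ReflTransGen
    (fun x y => ∃ e ∈ S, ends e = (x, y) ∨ ends e = (y, x)) a b

/-- A set `T` of edges is a spanning tree: it connects all vertices and has `|V| - 1` edges. -/
def IsSpanningTree {V E : Type*} [Fintype V] (ends : E → V × V) (T : Finset E) : Prop :=
  EdgeConn ends T ∧ T.card + 1 = Fintype.card V

open Classical in
/-- The total spanning tree weight `𝒯` of the weighted multigraph `(V, S, w)`, i.e. the sum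
over all spanning trees `T ⊆ S` of `∏_{e ∈ T} w e`. -/
noncomputable def treeWeight {V E : Type*} [Fintype V] [Fintype E] (ends : E → V × V)
    (w : E → ℝ) (S : Finset E) : ℝ :=
  ∑ T : Finset E, if T ⊆ S ∧ IsSpanningTree ends T then ∏ e ∈ T, w e else 0

namespace Deg2Aux

variable {V E : Type*}


def Step (ends : E → V × V) (S : Finset E) (x y : V) : Prop :=
  ∃ e ∈ S, ends e = (x, y) ∨ ends e = (y, x)

theorem step_symm (ends : E → V × V) (S : Finset E) : Symmetric (Step ends S) := by
  rintro x y ⟨e, he, h | h⟩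
  · exact ⟨e, he, Or.inr h⟩
  · exact ⟨e, he, Or.inl h⟩

theorem rtg_mono {ends : E → V × V} {S T : Finset E} (hST : S ⊆ T) {x y : V}
    (h : Relation.ReflTransGen (Step ends S) x y) :
    Relation.ReflTransGen (Step ends T) x y := by
  refine Relation.ReflTransGen.mono ?_ _ _ h
  rintro p q ⟨e, he, ho⟩
  exact ⟨e, hST he, ho⟩


variable {E' : Type*}

section SA
variable [DecidableEq E] {e₁ e₂ : E}

noncomputable def downSet (e₁ e₂ : E) (S : Finset E) :
    Finset ({e : E // e ≠ e₁ ∧ e ≠ e₂} ⊕ Unit) :=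
  (S.subtype (fun e => e ≠ e₁ ∧ e ≠ e₂)).map ⟨Sum.inl, Sum.inl_injective⟩

open Classical in
noncomputable def upSet [Fintype E] (e₁ e₂ : E)
    (T' : Finset ({e : E // e ≠ e₁ ∧ e ≠ e₂} ⊕ Unit)) : Finset E :=
  univ.filter (fun e => ∃ h : e ≠ e₁ ∧ e ≠ e₂, Sum.inl ⟨e, h⟩ ∈ T')

theorem inl_mem_downSet {S : Finset E} {x : {e : E // e ≠ e₁ ∧ e ≠ e₂}} :
    Sum.inl x ∈ downSet e₁ e₂ S ↔ x.1 ∈ S := by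
  simp only [downSet, Finset.mem_map, Function.Embedding.coeFn_mk]
  constructor
  · rintro ⟨y, hy, hxy⟩
    obtain rfl : y = x := Sum.inl_injective hxy
    exact Finset.mem_subtype.1 hy
  · intro hx
    exact ⟨x, Finset.mem_subtype.2 hx, rfl⟩

theorem inr_not_mem_downSet {S : Finset E} (u : Unit) :
    Sum.inr u ∉ downSet e₁ e₂ S := by
  simp [downSet, Finset.mem_map]

theorem mem_upSet [Fintype E] {T' : Finset ({e : E // e ≠ e₁ ∧ e ≠ e₂} ⊕ Unit)} {e : E} :
    e ∈ upSet e₁ e₂ T' ↔ ∃ h : e ≠ e₁ ∧ e ≠ e₂, Sum.inl ⟨e, h⟩ ∈ T' := by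
  classical
  simp only [upSet, Finset.mem_filter, Finset.mem_univ, true_and]

theorem card_downSet (S : Finset E) (hS : ∀ e ∈ S, e ≠ e₁ ∧ e ≠ e₂) :
    (downSet e₁ e₂ S).card = S.card := by
  rw [downSet, Finset.card_map, Finset.card_subtype]
  congr 1
  exact Finset.filter_true_of_mem hS

theorem prod_downSet (S : Finset E) (hS : ∀ e ∈ S, e ≠ e₁ ∧ e ≠ e₂) (w : E → ℝ) (c : ℝ) :
    ∏ x ∈ downSet e₁ e₂ S, (Sum.elim (fun e : {e : E // e ≠ e₁ ∧ e ≠ e₂} => w e.1)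
      (fun _ => c)) x = ∏ e ∈ S, w e := by
  rw [downSet, Finset.prod_map]
  simp only [Function.Embedding.coeFn_mk, Sum.elim_inl]
  rw [Finset.prod_subtype_eq_prod_filter]
  congr 1
  exact Finset.filter_true_of_mem hS

theorem upSet_downSet [Fintype E] (T : Finset E) :
    upSet e₁ e₂ (downSet e₁ e₂ T) = T.filter (fun e => e ≠ e₁ ∧ e ≠ e₂) := by
  ext e
  rw [mem_upSet]
  simp only [Finset.mem_filter]
  constructor
  · rintro ⟨h, hh⟩
    exact ⟨inl_mem_downSet.1 hh, h⟩
  · rintro ⟨he, h⟩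
    exact ⟨h, inl_mem_downSet.2 he⟩

theorem downSet_upSet [Fintype E] (T' : Finset ({e : E // e ≠ e₁ ∧ e ≠ e₂} ⊕ Unit)) :
    downSet e₁ e₂ (upSet e₁ e₂ T') = T'.erase (Sum.inr ()) := by
  ext x
  match x with
  | Sum.inl e =>
    rw [inl_mem_downSet, mem_upSet]
    simp only [Finset.mem_erase]
    constructor
    · rintro ⟨h, hh⟩
      exact ⟨by simp, hh⟩
    · rintro ⟨-, hh⟩
      exact ⟨e.2, hh⟩
  | Sum.inr u =>
    cases u
    simp [inr_not_mem_downSet]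

theorem downSet_insert {e : E} (he : e = e₁ ∨ e = e₂) (T : Finset E) :
    downSet e₁ e₂ (insert e T) = downSet e₁ e₂ T := by
  ext x
  match x with
  | Sum.inl y =>
    rw [inl_mem_downSet, inl_mem_downSet, Finset.mem_insert]
    have hy : y.1 ≠ e := by
      rcases he with rfl | rfl
      · exact y.2.1
      · exact y.2.2
    constructor
    · rintro (h | h)
      · exact absurd h hy
      · exact h
    · exact Or.inr
  | Sum.inr u => simp [inr_not_mem_downSet]

theorem upSet_insert_inr [Fintype E] (T' : Finset ({e : E // e ≠ e₁ ∧ e ≠ e₂} ⊕ Unit)) :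
    upSet e₁ e₂ (insert (Sum.inr ()) T') = upSet e₁ e₂ T' := by
  ext e
  rw [mem_upSet, mem_upSet]
  constructor
  · rintro ⟨h, hh⟩
    rcases Finset.mem_insert.1 hh with h' | h'
    · exact absurd h' (by simp)
    · exact ⟨h, h'⟩
  · rintro ⟨h, hh⟩
    exact ⟨h, Finset.mem_insert_of_mem hh⟩

theorem filter_both (hne : e₁ ≠ e₂) {T : Finset E} (h1 : e₁ ∈ T) (h2 : e₂ ∈ T) :
    insert e₁ (insert e₂ (T.filter (fun e => e ≠ e₁ ∧ e ≠ e₂))) = T := by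
  ext x
  simp only [Finset.mem_insert, Finset.mem_filter]
  constructor
  · rintro (rfl | rfl | ⟨hx, -⟩) <;> assumption
  · intro hx
    by_cases hx1 : x = e₁
    · exact Or.inl hx1
    by_cases hx2 : x = e₂
    · exact Or.inr (Or.inl hx2)
    · exact Or.inr (Or.inr ⟨hx, hx1, hx2⟩)

theorem filter_one₁ {T : Finset E} (h1 : e₁ ∈ T) (h2 : e₂ ∉ T) :
    insert e₁ (T.filter (fun e => e ≠ e₁ ∧ e ≠ e₂)) = T := by
  ext x
  simp only [Finset.mem_insert, Finset.mem_filter]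
  constructor
  · rintro (rfl | ⟨hx, -⟩) <;> assumption
  · intro hx
    by_cases hx1 : x = e₁
    · exact Or.inl hx1
    · exact Or.inr ⟨hx, hx1, fun h => h2 (h ▸ hx)⟩

theorem filter_one₂ {T : Finset E} (h1 : e₂ ∈ T) (h2 : e₁ ∉ T) :
    insert e₂ (T.filter (fun e => e ≠ e₁ ∧ e ≠ e₂)) = T := by
  ext x
  simp only [Finset.mem_insert, Finset.mem_filter]
  constructor
  · rintro (rfl | ⟨hx, -⟩) <;> assumption
  · intro hx
    by_cases hx2 : x = e₂
    · exact Or.inl hx2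
    · exact Or.inr ⟨hx, fun h => h2 (h ▸ hx), hx2⟩

theorem e₁_not_mem_filter (T : Finset E) :
    e₁ ∉ T.filter (fun e => e ≠ e₁ ∧ e ≠ e₂) := by
  simp [Finset.mem_filter]

theorem e₂_not_mem_filter (T : Finset E) :
    e₂ ∉ T.filter (fun e => e ≠ e₁ ∧ e ≠ e₂) := by
  simp [Finset.mem_filter]

theorem e₁_not_mem_upSet [Fintype E] (T' : Finset ({e : E // e ≠ e₁ ∧ e ≠ e₂} ⊕ Unit)) :
    e₁ ∉ upSet e₁ e₂ T' := by
  rw [mem_upSet]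
  rintro ⟨⟨h, -⟩, -⟩
  exact h rfl

theorem e₂_not_mem_upSet [Fintype E] (T' : Finset ({e : E // e ≠ e₁ ∧ e ≠ e₂} ⊕ Unit)) :
    e₂ ∉ upSet e₁ e₂ T' := by
  rw [mem_upSet]
  rintro ⟨⟨-, h⟩, -⟩
  exact h rfl

theorem mem_upSet_prop [Fintype E] {T' : Finset ({e : E // e ≠ e₁ ∧ e ≠ e₂} ⊕ Unit)}
    {e : E} (h : e ∈ upSet e₁ e₂ T') : e ≠ e₁ ∧ e ≠ e₂ := by
  obtain ⟨h, -⟩ := mem_upSet.1 h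
  exact h


theorem downSet_filter {E : Type*} [DecidableEq E] {e₁ e₂ : E} (T : Finset E) :
    downSet e₁ e₂ (T.filter (fun e => e ≠ e₁ ∧ e ≠ e₂)) = downSet e₁ e₂ T := by
  ext x
  match x with
  | Sum.inl y =>
    rw [inl_mem_downSet, inl_mem_downSet, Finset.mem_filter]
    exact ⟨fun h => h.1, fun h => ⟨h, y.2⟩⟩
  | Sum.inr u => simp [inr_not_mem_downSet]

end SA

section Transfer


variable [DecidableEq E] [DecidableEq V] {ends : E → V × V} {v : V} {e₁ e₂ : E}
  {ends' : {e : E // e ≠ e₁ ∧ e ≠ e₂} ⊕ Unit → {u : V // u ≠ v} × {u : V // u ≠ v}}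

theorem off_forward
    (hdeg : ∀ e : E, e ≠ e₁ → e ≠ e₂ → (ends e).1 ≠ v ∧ (ends e).2 ≠ v)
    (hends'old : ∀ e : {e : E // e ≠ e₁ ∧ e ≠ e₂},
      ((ends' (Sum.inl e)).1 : V) = (ends e.1).1 ∧ ((ends' (Sum.inl e)).2 : V) = (ends e.1).2)
    (S : Finset E) (hS : ∀ e ∈ S, e ≠ e₁ ∧ e ≠ e₂)
    {x y : V} (hx : x ≠ v)
    (h : Relation.ReflTransGen (Step ends S) x y) :
    ∃ hy : y ≠ v, Relation.ReflTransGen (Step ends' (downSet e₁ e₂ S)) ⟨x, hx⟩ ⟨y, hy⟩ := by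
  induction h with
  | refl => exact ⟨hx, .refl⟩
  | @tail p q hxp hpq ih =>
    obtain ⟨hp, ihp⟩ := ih
    obtain ⟨e, heS, hor⟩ := hpq
    obtain ⟨h1, h2⟩ := hS e heS
    have hnd := hdeg e h1 h2
    have hq : q ≠ v := by
      rcases hor with h | h
      · have := hnd.2; rw [h] at this; exact this
      · have := hnd.1; rw [h] at this; exact this
    refine ⟨hq, ihp.tail ?_⟩
    refine ⟨Sum.inl ⟨e, h1, h2⟩, inl_mem_downSet.2 heS, ?_⟩
    obtain ⟨hh1, hh2⟩ := hends'old ⟨e, h1, h2⟩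
    rcases hor with h | h
    · exact Or.inl (Prod.ext (Subtype.ext (by rw [hh1, h])) (Subtype.ext (by rw [hh2, h])))
    · exact Or.inr (Prod.ext (Subtype.ext (by rw [hh1, h])) (Subtype.ext (by rw [hh2, h])))

theorem off_back
    (hends'old : ∀ e : {e : E // e ≠ e₁ ∧ e ≠ e₂},
      ((ends' (Sum.inl e)).1 : V) = (ends e.1).1 ∧ ((ends' (Sum.inl e)).2 : V) = (ends e.1).2)
    (S : Finset E)
    {x' y' : {u : V // u ≠ v}}
    (h : Relation.ReflTransGen (Step ends' (downSet e₁ e₂ S)) x' y') :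
    Relation.ReflTransGen (Step ends S) x'.1 y'.1 := by
  refine Relation.ReflTransGen.lift' Subtype.val ?_ _ _ h
  rintro p q ⟨e', he', hor⟩
  match e' with
  | Sum.inr u => exact absurd he' (inr_not_mem_downSet u)
  | Sum.inl e =>
    refine Relation.ReflTransGen.single ⟨e.1, inl_mem_downSet.1 he', ?_⟩
    obtain ⟨hh1, hh2⟩ := hends'old e
    rcases hor with h | h
    · exact Or.inl (Prod.ext (by rw [← hh1, h]) (by rw [← hh2, h]))
    · exact Or.inr (Prod.ext (by rw [← hh1, h]) (by rw [← hh2, h]))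

/-- Projection of `V` to `V'` sending `v` to a default vertex `c`. -/
def proj [DecidableEq V] (v c : V) (hc : c ≠ v) : V → {u : V // u ≠ v} :=
  fun u => if h : u = v then ⟨c, hc⟩ else ⟨u, h⟩

theorem proj_eq_of [DecidableEq V] {v c : V} (hc : c ≠ v) {u : V} (h : u = v ∨ u = c) :
    proj v c hc u = ⟨c, hc⟩ := by
  rcases h with rfl | rfl
  · simp [proj]
  · simp [proj, hc]

theorem proj_ne [DecidableEq V] {v c : V} (hc : c ≠ v) {u : V} (hu : u ≠ v) :
    proj v c hc u = ⟨u, hu⟩ := by simp [proj, hu]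

theorem conn_one
    (hdeg : ∀ e : E, e ≠ e₁ → e ≠ e₂ → (ends e).1 ≠ v ∧ (ends e).2 ≠ v)
    (hends'old : ∀ e : {e : E // e ≠ e₁ ∧ e ≠ e₂},
      ((ends' (Sum.inl e)).1 : V) = (ends e.1).1 ∧ ((ends' (Sum.inl e)).2 : V) = (ends e.1).2)
    (eK : E) (c : V) (hc : c ≠ v) (heK : ends eK = (v, c) ∨ ends eK = (c, v))
    (S : Finset E) (hS : ∀ e ∈ S, e ≠ e₁ ∧ e ≠ e₂) :
    EdgeConn ends (insert eK S) ↔ EdgeConn ends' (downSet e₁ e₂ S) := by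
  constructor
  · intro h u' w'
    have hp : Relation.ReflTransGen (Step ends (insert eK S)) u'.1 w'.1 := h u'.1 w'.1
    have key : ∀ x y, Step ends (insert eK S) x y →
        Relation.ReflTransGen (Step ends' (downSet e₁ e₂ S))
          (proj v c hc x) (proj v c hc y) := by
      rintro x y ⟨e, he, hor⟩
      rcases Finset.mem_insert.1 he with rfl | heS
      · have hxy : proj v c hc x = ⟨c, hc⟩ ∧ proj v c hc y = ⟨c, hc⟩ := by
          rcases heK with hK | hK <;> rcases hor with h' | h' <;> rw [hK] at h' <;>
            injection h' with h1 h2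
          · exact ⟨proj_eq_of hc (Or.inl h1.symm), proj_eq_of hc (Or.inr h2.symm)⟩
          · exact ⟨proj_eq_of hc (Or.inr h2.symm), proj_eq_of hc (Or.inl h1.symm)⟩
          · exact ⟨proj_eq_of hc (Or.inr h1.symm), proj_eq_of hc (Or.inl h2.symm)⟩
          · exact ⟨proj_eq_of hc (Or.inl h2.symm), proj_eq_of hc (Or.inr h1.symm)⟩
        rw [hxy.1, hxy.2]
      · have hx : x ≠ v := by
          rcases hor with h' | h'
          · have := (hdeg e (hS e heS).1 (hS e heS).2).1; rw [h'] at this; exact this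
          · have := (hdeg e (hS e heS).1 (hS e heS).2).2; rw [h'] at this; exact this
        obtain ⟨hy, hpath⟩ := off_forward hdeg hends'old S hS hx
          (Relation.ReflTransGen.single ⟨e, heS, hor⟩)
        rw [proj_ne hc hx, proj_ne hc hy]
        exact hpath
    have := Relation.ReflTransGen.lift' (proj v c hc) key _ _ hp; dsimp only [Function.onFun] at this
    rwa [proj_ne hc u'.2, proj_ne hc w'.2] at this
  · intro h u w
    have hstepK : Step ends (insert eK S) v c := by
      refine ⟨eK, Finset.mem_insert_self _ _, ?_⟩
      rcases heK with h' | h'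
      · exact Or.inl h'
      · exact Or.inr h'
    have hlink : ∀ u : V, Relation.ReflTransGen (Step ends (insert eK S)) u
        (proj v c hc u).1 := by
      intro u
      by_cases hu : u = v
      · subst hu
        rw [proj_eq_of hc (Or.inl rfl)]
        exact Relation.ReflTransGen.single hstepK
      · rw [proj_ne hc hu]
    have hmid : Relation.ReflTransGen (Step ends (insert eK S))
        (proj v c hc u).1 (proj v c hc w).1 :=
      rtg_mono (Finset.subset_insert _ _)
        (off_back hends'old S (h (proj v c hc u) (proj v c hc w)))
    exact (hlink u).trans (hmid.trans
      (Std.Symm.symm (self := @Relation.ReflTransGen.stdSymm _ _ ( ⟨fun _ _ h => step_symm _ _ h⟩)) _ _ (hlink w)))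

set_option maxHeartbeats 1000000 in
theorem conn_both {a b : V} (hva : a ≠ v) (hvb : b ≠ v)
    (he₁ : ends e₁ = (v, a) ∨ ends e₁ = (a, v))
    (he₂ : ends e₂ = (v, b) ∨ ends e₂ = (b, v))
    (hdeg : ∀ e : E, e ≠ e₁ → e ≠ e₂ → (ends e).1 ≠ v ∧ (ends e).2 ≠ v)
    (hends'old : ∀ e : {e : E // e ≠ e₁ ∧ e ≠ e₂},
      ((ends' (Sum.inl e)).1 : V) = (ends e.1).1 ∧ ((ends' (Sum.inl e)).2 : V) = (ends e.1).2)
    (hends'new : ends' (Sum.inr ()) = (⟨a, hva⟩, ⟨b, hvb⟩) ∨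
      ends' (Sum.inr ()) = (⟨b, hvb⟩, ⟨a, hva⟩))
    (S : Finset E) (hS : ∀ e ∈ S, e ≠ e₁ ∧ e ≠ e₂) :
    EdgeConn ends (insert e₁ (insert e₂ S)) ↔
      EdgeConn ends' (insert (Sum.inr ()) (downSet e₁ e₂ S)) := by
  have stepf : ∀ (x' y' : {u : V // u ≠ v}),
      ((x' = ⟨a, hva⟩ ∧ y' = ⟨b, hvb⟩) ∨ (x' = ⟨b, hvb⟩ ∧ y' = ⟨a, hva⟩)) →
      Step ends' (insert (Sum.inr ()) (downSet e₁ e₂ S)) x' y' := by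
    rintro x' y' (⟨rfl, rfl⟩ | ⟨rfl, rfl⟩)
    · refine ⟨Sum.inr (), Finset.mem_insert_self _ _, ?_⟩
      rcases hends'new with h | h
      · exact Or.inl h
      · exact Or.inr h
    · refine ⟨Sum.inr (), Finset.mem_insert_self _ _, ?_⟩
      rcases hends'new with h | h
      · exact Or.inr h
      · exact Or.inl h
  constructor
  · intro h u' w'
    have hp : Relation.ReflTransGen (Step ends (insert e₁ (insert e₂ S))) u'.1 w'.1 :=
      h u'.1 w'.1
    have key : ∀ x y, Step ends (insert e₁ (insert e₂ S)) x y →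
        Relation.ReflTransGen (Step ends' (insert (Sum.inr ()) (downSet e₁ e₂ S)))
          (proj v a hva x) (proj v a hva y) := by
      rintro x y ⟨e, he, hor⟩
      rcases Finset.mem_insert.1 he with rfl | he'
      · -- e = e₁ : both endpoints project to ⟨a, hva⟩
        have hxy : proj v a hva x = ⟨a, hva⟩ ∧ proj v a hva y = ⟨a, hva⟩ := by
          rcases he₁ with hK | hK <;> rcases hor with h' | h' <;> rw [hK] at h' <;>
            injection h' with h1 h2
          · exact ⟨proj_eq_of hva (Or.inl h1.symm), proj_eq_of hva (Or.inr h2.symm)⟩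
          · exact ⟨proj_eq_of hva (Or.inr h2.symm), proj_eq_of hva (Or.inl h1.symm)⟩
          · exact ⟨proj_eq_of hva (Or.inr h1.symm), proj_eq_of hva (Or.inl h2.symm)⟩
          · exact ⟨proj_eq_of hva (Or.inl h2.symm), proj_eq_of hva (Or.inr h1.symm)⟩
        rw [hxy.1, hxy.2]
      rcases Finset.mem_insert.1 he' with rfl | heS
      · -- e = e₂ : endpoints are v and b, projecting to ⟨a⟩ and ⟨b⟩
        have hb' : proj v a hva b = ⟨b, hvb⟩ := proj_ne hva hvb
        have hv' : proj v a hva v = ⟨a, hva⟩ := proj_eq_of hva (Or.inl rfl)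
        refine Relation.ReflTransGen.single (stepf _ _ ?_)
        rcases he₂ with hK | hK <;> rcases hor with h' | h' <;> rw [hK] at h' <;>
          injection h' with h1 h2
        · rw [← h1, ← h2]; exact Or.inl ⟨hv', hb'⟩
        · rw [← h1, ← h2]; exact Or.inr ⟨hb', hv'⟩
        · rw [← h1, ← h2]; exact Or.inr ⟨hb', hv'⟩
        · rw [← h1, ← h2]; exact Or.inl ⟨hv', hb'⟩
      · have hx : x ≠ v := by
          rcases hor with h' | h'
          · have := (hdeg e (hS e heS).1 (hS e heS).2).1; rw [h'] at this; exact this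
          · have := (hdeg e (hS e heS).1 (hS e heS).2).2; rw [h'] at this; exact this
        obtain ⟨hy, hpath⟩ := off_forward hdeg hends'old S hS hx
          (Relation.ReflTransGen.single ⟨e, heS, hor⟩)
        rw [proj_ne hva hx, proj_ne hva hy]
        exact rtg_mono (Finset.subset_insert _ _) hpath
    have := Relation.ReflTransGen.lift' (proj v a hva) key _ _ hp; dsimp only [Function.onFun] at this
    rwa [proj_ne hva u'.2, proj_ne hva w'.2] at this
  · intro h u w
    have hstep1 : Step ends (insert e₁ (insert e₂ S)) v a := by
      refine ⟨e₁, Finset.mem_insert_self _ _, ?_⟩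
      rcases he₁ with h' | h'
      · exact Or.inl h'
      · exact Or.inr h'
    have hstep2 : Step ends (insert e₁ (insert e₂ S)) v b := by
      refine ⟨e₂, Finset.mem_insert_of_mem (Finset.mem_insert_self _ _), ?_⟩
      rcases he₂ with h' | h'
      · exact Or.inl h'
      · exact Or.inr h'
    have hab : Relation.ReflTransGen (Step ends (insert e₁ (insert e₂ S))) a b :=
      (Relation.ReflTransGen.single (step_symm _ _ hstep1)).tail hstep2
    have key : ∀ (x' y' : {u : V // u ≠ v}),
        Step ends' (insert (Sum.inr ()) (downSet e₁ e₂ S)) x' y' →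
        Relation.ReflTransGen (Step ends (insert e₁ (insert e₂ S))) x'.1 y'.1 := by
      rintro x' y' ⟨e', he', hor⟩
      rcases Finset.mem_insert.1 he' with rfl | heD
      · have hxy : ((x' : {u : V // u ≠ v}) = ⟨a, hva⟩ ∧ y' = ⟨b, hvb⟩) ∨
            (x' = ⟨b, hvb⟩ ∧ y' = ⟨a, hva⟩) := by
          rcases hends'new with hN | hN <;> rcases hor with h' | h' <;> rw [hN] at h' <;>
            injection h' with h1 h2
          · exact Or.inl ⟨h1.symm, h2.symm⟩
          · exact Or.inr ⟨h2.symm, h1.symm⟩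
          · exact Or.inr ⟨h1.symm, h2.symm⟩
          · exact Or.inl ⟨h2.symm, h1.symm⟩
        rcases hxy with ⟨rfl, rfl⟩ | ⟨rfl, rfl⟩
        · exact hab
        · exact Std.Symm.symm (self := @Relation.ReflTransGen.stdSymm _ _
            ( ⟨fun _ _ h => step_symm ends (insert e₁ (insert e₂ S)) h⟩)) _ _ hab
      · exact rtg_mono (fun z hz => Finset.mem_insert_of_mem (Finset.mem_insert_of_mem hz))
          (off_back hends'old S (Relation.ReflTransGen.single ⟨e', heD, hor⟩))
    have hlink : ∀ u : V, Relation.ReflTransGen (Step ends (insert e₁ (insert e₂ S))) u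
        (proj v a hva u).1 := by
      intro u
      by_cases hu : u = v
      · subst hu
        rw [proj_eq_of hva (Or.inl rfl)]
        exact Relation.ReflTransGen.single hstep1
      · rw [proj_ne hva hu]
    have hmid : Relation.ReflTransGen (Step ends (insert e₁ (insert e₂ S)))
        (proj v a hva u).1 (proj v a hva w).1 := by
      have hp' := h (proj v a hva u) (proj v a hva w)
      exact Relation.ReflTransGen.lift' Subtype.val key _ _ hp'
    exact (hlink u).trans (hmid.trans
      (Std.Symm.symm (self := @Relation.ReflTransGen.stdSymm _ _ ( ⟨fun _ _ h => step_symm _ _ h⟩)) _ _ (hlink w)))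

end Transfer

end Deg2Aux

open Deg2Aux

set_option maxHeartbeats 2000000

/-- Degree-two vertex elimination. Let `v` be a vertex of degree exactly `2` in a connected
weighted multigraph `G`, with incident edges `e₁ ≠ e₂` of weights `w e₁, w e₂` joining `v`
to (not necessarily distinct) vertices `a, b ≠ v`. Let `G_new` be the graph obtained by
deleting `v` (and `e₁, e₂`) and adding one new edge between `a` and `b` of weight
`w e₁ * w e₂ / (w e₁ + w e₂)`. Then `𝒯(G) = (w e₁ + w e₂) ⬝ 𝒯(G_new)`. -/
theorem treeWeight_remove_degree_two {V E : Type*} [Fintype V] [Fintype E] [DecidableEq V]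
    [DecidableEq E]
    (ends : E → V × V) (w : E → ℝ) (v a b : V) (e₁ e₂ : E)
    (hw : ∀ e, 0 < w e) (hconn : EdgeConn ends univ)
    (hne : e₁ ≠ e₂) (hva : a ≠ v) (hvb : b ≠ v)
    (he₁ : ends e₁ = (v, a) ∨ ends e₁ = (a, v))
    (he₂ : ends e₂ = (v, b) ∨ ends e₂ = (b, v))
    (hdeg : ∀ e : E, e ≠ e₁ → e ≠ e₂ → (ends e).1 ≠ v ∧ (ends e).2 ≠ v)
    (ends' : {e : E // e ≠ e₁ ∧ e ≠ e₂} ⊕ Unit → {u : V // u ≠ v} × {u : V // u ≠ v})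
    (hends'old : ∀ e : {e : E // e ≠ e₁ ∧ e ≠ e₂},
      ((ends' (Sum.inl e)).1 : V) = (ends e.1).1 ∧ ((ends' (Sum.inl e)).2 : V) = (ends e.1).2)
    (hends'new : ends' (Sum.inr ()) = (⟨a, hva⟩, ⟨b, hvb⟩) ∨
      ends' (Sum.inr ()) = (⟨b, hvb⟩, ⟨a, hva⟩)) :
    treeWeight ends w univ =
      (w e₁ + w e₂) *
        treeWeight ends'
          (Sum.elim (fun e => w e.1) (fun _ => w e₁ * w e₂ / (w e₁ + w e₂))) univ := by
  classical
  have hW : w e₁ + w e₂ ≠ 0 := (add_pos (hw e₁) (hw e₂)).ne'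
  set w' : {e : E // e ≠ e₁ ∧ e ≠ e₂} ⊕ Unit → ℝ :=
    Sum.elim (fun e => w e.1) (fun _ => w e₁ * w e₂ / (w e₁ + w e₂)) with hw'
  -- cardinality of V versus V'
  have cardV : Fintype.card V = Fintype.card {u : V // u ≠ v} + 1 := by
    have h1 : Fintype.card {u : V // u = v} = 1 := Fintype.card_subtype_eq v
    have h2 := Fintype.card_subtype_compl (fun u : V => u = v)
    have h3 : Fintype.card {u : V // ¬ u = v} = Fintype.card {u : V // u ≠ v} :=
      Fintype.card_congr (Equiv.subtypeEquivRight (fun _ => Iff.rfl))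
    have h4 : 0 < Fintype.card V := Fintype.card_pos_iff.2 ⟨v⟩
    omega
  -- every spanning tree contains e₁ or e₂
  have hspan_mem : ∀ T : Finset E, IsSpanningTree ends T → e₁ ∈ T ∨ e₂ ∈ T := by
    intro T hT
    have hpath : Relation.ReflTransGen (Step ends T) v a := hT.1 v a
    rcases hpath.cases_head with heq | ⟨c, ⟨e, heT, hor⟩, -⟩
    · exact absurd heq.symm hva
    · by_cases h1 : e = e₁
      · exact Or.inl (h1 ▸ heT)
      by_cases h2 : e = e₂
      · exact Or.inr (h2 ▸ heT)
      · obtain ⟨hd1, hd2⟩ := hdeg e h1 h2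
        rcases hor with h | h
        · exact absurd (by rw [h]) hd1
        · exact absurd (by rw [h]) hd2
  have hfiltp : ∀ T : Finset E, ∀ e ∈ T.filter (fun e => e ≠ e₁ ∧ e ≠ e₂), e ≠ e₁ ∧ e ≠ e₂ :=
    fun T e he => (Finset.mem_filter.1 he).2
  -- split the left-hand side into three sums
  have hLHS : treeWeight ends w univ =
      (∑ T ∈ univ.filter (fun T : Finset E =>
          IsSpanningTree ends T ∧ e₁ ∈ T ∧ e₂ ∈ T), ∏ e ∈ T, w e)
      + (∑ T ∈ univ.filter (fun T : Finset E =>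
          IsSpanningTree ends T ∧ e₁ ∈ T ∧ e₂ ∉ T), ∏ e ∈ T, w e)
      + (∑ T ∈ univ.filter (fun T : Finset E =>
          IsSpanningTree ends T ∧ e₁ ∉ T ∧ e₂ ∈ T), ∏ e ∈ T, w e) := by
    rw [treeWeight, Finset.sum_filter, Finset.sum_filter, Finset.sum_filter,
      ← Finset.sum_add_distrib, ← Finset.sum_add_distrib]
    refine Finset.sum_congr rfl fun T _ => ?_
    by_cases hP : IsSpanningTree ends T
    · by_cases h1 : e₁ ∈ T <;> by_cases h2 : e₂ ∈ T
      · simp [hP, h1, h2]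
      · simp [hP, h1, h2]
      · simp [hP, h1, h2]
      · rcases hspan_mem T hP with h | h
        · exact absurd h h1
        · exact absurd h h2
    · simp [hP]
  -- split the right-hand side into two sums
  have hRHS : treeWeight ends' w' univ =
      (∑ T' ∈ univ.filter (fun T' : Finset ({e : E // e ≠ e₁ ∧ e ≠ e₂} ⊕ Unit) =>
          IsSpanningTree ends' T' ∧ Sum.inr () ∈ T'), ∏ x ∈ T', w' x)
      + (∑ T' ∈ univ.filter (fun T' : Finset ({e : E // e ≠ e₁ ∧ e ≠ e₂} ⊕ Unit) =>
          IsSpanningTree ends' T' ∧ Sum.inr () ∉ T'), ∏ x ∈ T', w' x) := by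
    rw [treeWeight, Finset.sum_filter, Finset.sum_filter, ← Finset.sum_add_distrib]
    refine Finset.sum_congr rfl fun T' _ => ?_
    by_cases hP : IsSpanningTree ends' T'
    · by_cases hf : Sum.inr () ∈ T' <;> simp [hP, hf]
    · simp [hP]
  -- the "both edges" bijection
  have e12 : (∑ T ∈ univ.filter (fun T : Finset E =>
      IsSpanningTree ends T ∧ e₁ ∈ T ∧ e₂ ∈ T), ∏ e ∈ T, w e) =
      ∑ T' ∈ univ.filter (fun T' : Finset ({e : E // e ≠ e₁ ∧ e ≠ e₂} ⊕ Unit) =>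
        IsSpanningTree ends' T' ∧ Sum.inr () ∈ T'),
          (w e₁ + w e₂) * ∏ x ∈ T', w' x := by
    refine Finset.sum_nbij' (fun T => insert (Sum.inr ()) (downSet e₁ e₂ T))
      (fun T' => insert e₁ (insert e₂ (upSet e₁ e₂ T'))) ?_ ?_ ?_ ?_ ?_
    · intro T hT
      rw [Finset.mem_filter] at hT
      obtain ⟨-, ⟨hconnT, hcardT⟩, h1, h2⟩ := hT
      rw [Finset.mem_filter]
      refine ⟨Finset.mem_univ _, ⟨?_, ?_⟩, Finset.mem_insert_self _ _⟩
      · have hcb := (conn_both hva hvb he₁ he₂ hdeg hends'old hends'new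
          (T.filter (fun e => e ≠ e₁ ∧ e ≠ e₂)) (hfiltp T)).1
        rw [filter_both hne h1 h2] at hcb
        have := hcb hconnT
        rwa [downSet_filter] at this
      · have hc : (downSet e₁ e₂ T).card = (T.filter (fun e => e ≠ e₁ ∧ e ≠ e₂)).card := by
          rw [← downSet_filter T]
          exact card_downSet _ (hfiltp T)
        have hTc : T.card = (T.filter (fun e => e ≠ e₁ ∧ e ≠ e₂)).card + 2 := by
          conv_lhs => rw [← filter_both hne h1 h2]
          rw [Finset.card_insert_of_notMem, Finset.card_insert_of_notMem
            (e₂_not_mem_filter T)]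
          intro hmem
          rcases Finset.mem_insert.1 hmem with h | h
          · exact hne h
          · exact e₁_not_mem_filter T h
        rw [Finset.card_insert_of_notMem (inr_not_mem_downSet ())]
        omega
    · intro T' hT'
      rw [Finset.mem_filter] at hT'
      obtain ⟨-, ⟨hconnT', hcardT'⟩, hf⟩ := hT'
      rw [Finset.mem_filter]
      have hSu : ∀ e ∈ upSet e₁ e₂ T', e ≠ e₁ ∧ e ≠ e₂ := fun e he => mem_upSet_prop he
      refine ⟨Finset.mem_univ _, ⟨?_, ?_⟩, Finset.mem_insert_self _ _,
        Finset.mem_insert_of_mem (Finset.mem_insert_self _ _)⟩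
      · have hcb := (conn_both hva hvb he₁ he₂ hdeg hends'old hends'new
          (upSet e₁ e₂ T') hSu).2
        apply hcb
        rwa [downSet_upSet, Finset.insert_erase hf]
      · have hu : (upSet e₁ e₂ T').card = T'.card - 1 := by
          have hc := card_downSet (e₁ := e₁) (e₂ := e₂) (upSet e₁ e₂ T') hSu
          rw [downSet_upSet, Finset.card_erase_of_mem hf] at hc
          omega
        have hT'pos : 0 < T'.card := Finset.card_pos.2 ⟨_, hf⟩
        rw [Finset.card_insert_of_notMem, Finset.card_insert_of_notMem
          (e₂_not_mem_upSet T')]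
        · omega
        · intro hmem
          rcases Finset.mem_insert.1 hmem with h | h
          · exact hne h
          · exact e₁_not_mem_upSet T' h
    · intro T hT
      rw [Finset.mem_filter] at hT
      obtain ⟨-, -, h1, h2⟩ := hT
      rw [upSet_insert_inr, upSet_downSet, filter_both hne h1 h2]
    · intro T' hT'
      rw [Finset.mem_filter] at hT'
      obtain ⟨-, -, hf⟩ := hT'
      rw [downSet_insert (Or.inl rfl), downSet_insert (Or.inr rfl), downSet_upSet,
        Finset.insert_erase hf]
    · intro T hT
      rw [Finset.mem_filter] at hT
      obtain ⟨-, -, h1, h2⟩ := hT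
      rw [Finset.prod_insert (inr_not_mem_downSet ())]
      have hdp : ∏ x ∈ downSet e₁ e₂ T, w' x = ∏ e ∈ T.filter
          (fun e => e ≠ e₁ ∧ e ≠ e₂), w e := by
        rw [← downSet_filter T, hw']
        exact prod_downSet _ (hfiltp T) w _
      rw [hdp]
      have hw'f : w' (Sum.inr ()) = w e₁ * w e₂ / (w e₁ + w e₂) := rfl
      rw [hw'f]
      conv_lhs => rw [← filter_both hne h1 h2]
      rw [Finset.prod_insert, Finset.prod_insert (e₂_not_mem_filter T)]
      · field_simp
      · intro hmem
        rcases Finset.mem_insert.1 hmem with h | h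
        · exact hne h
        · exact e₁_not_mem_filter T h
  -- the "only e₁" bijection
  have eB : (∑ T ∈ univ.filter (fun T : Finset E =>
      IsSpanningTree ends T ∧ e₁ ∈ T ∧ e₂ ∉ T), ∏ e ∈ T, w e) =
      ∑ T' ∈ univ.filter (fun T' : Finset ({e : E // e ≠ e₁ ∧ e ≠ e₂} ⊕ Unit) =>
        IsSpanningTree ends' T' ∧ Sum.inr () ∉ T'), w e₁ * ∏ x ∈ T', w' x := by
    refine Finset.sum_nbij' (fun T => downSet e₁ e₂ T)
      (fun T' => insert e₁ (upSet e₁ e₂ T')) ?_ ?_ ?_ ?_ ?_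
    · intro T hT
      rw [Finset.mem_filter] at hT
      obtain ⟨-, ⟨hconnT, hcardT⟩, h1, h2⟩ := hT
      rw [Finset.mem_filter]
      refine ⟨Finset.mem_univ _, ⟨?_, ?_⟩, inr_not_mem_downSet ()⟩
      · have hco := (conn_one hdeg hends'old e₁ a hva he₁
          (T.filter (fun e => e ≠ e₁ ∧ e ≠ e₂)) (hfiltp T)).1
        rw [filter_one₁ h1 h2] at hco
        have := hco hconnT
        rwa [downSet_filter] at this
      · have hc : (downSet e₁ e₂ T).card =
            (T.filter (fun e => e ≠ e₁ ∧ e ≠ e₂)).card := by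
          rw [← downSet_filter T]
          exact card_downSet _ (hfiltp T)
        have hTc : T.card = (T.filter (fun e => e ≠ e₁ ∧ e ≠ e₂)).card + 1 := by
          conv_lhs => rw [← filter_one₁ h1 h2]
          rw [Finset.card_insert_of_notMem (e₁_not_mem_filter T)]
        omega
    · intro T' hT'
      rw [Finset.mem_filter] at hT'
      obtain ⟨-, ⟨hconnT', hcardT'⟩, hf⟩ := hT'
      rw [Finset.mem_filter]
      have hSu : ∀ e ∈ upSet e₁ e₂ T', e ≠ e₁ ∧ e ≠ e₂ := fun e he => mem_upSet_prop he
      refine ⟨Finset.mem_univ _, ⟨?_, ?_⟩, Finset.mem_insert_self _ _, ?_⟩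
      · have hco := (conn_one hdeg hends'old e₁ a hva he₁ (upSet e₁ e₂ T') hSu).2
        apply hco
        rwa [downSet_upSet, Finset.erase_eq_of_notMem hf]
      · have hu : (upSet e₁ e₂ T').card = T'.card := by
          have hc := card_downSet (e₁ := e₁) (e₂ := e₂) (upSet e₁ e₂ T') hSu
          rw [downSet_upSet, Finset.erase_eq_of_notMem hf] at hc
          omega
        rw [Finset.card_insert_of_notMem (e₁_not_mem_upSet T')]
        omega
      · intro hmem
        rcases Finset.mem_insert.1 hmem with h | h
        · exact hne h.symm
        · exact e₂_not_mem_upSet T' h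
    · intro T hT
      rw [Finset.mem_filter] at hT
      obtain ⟨-, -, h1, h2⟩ := hT
      rw [upSet_downSet, filter_one₁ h1 h2]
    · intro T' hT'
      rw [Finset.mem_filter] at hT'
      obtain ⟨-, -, hf⟩ := hT'
      rw [downSet_insert (Or.inl rfl), downSet_upSet, Finset.erase_eq_of_notMem hf]
    · intro T hT
      rw [Finset.mem_filter] at hT
      obtain ⟨-, -, h1, h2⟩ := hT
      have hdp : ∏ x ∈ downSet e₁ e₂ T, w' x = ∏ e ∈ T.filter
          (fun e => e ≠ e₁ ∧ e ≠ e₂), w e := by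
        rw [← downSet_filter T, hw']
        exact prod_downSet _ (hfiltp T) w _
      rw [hdp]
      conv_lhs => rw [← filter_one₁ h1 h2]
      rw [Finset.prod_insert (e₁_not_mem_filter T)]
  -- the "only e₂" bijection
  have eC : (∑ T ∈ univ.filter (fun T : Finset E =>
      IsSpanningTree ends T ∧ e₁ ∉ T ∧ e₂ ∈ T), ∏ e ∈ T, w e) =
      ∑ T' ∈ univ.filter (fun T' : Finset ({e : E // e ≠ e₁ ∧ e ≠ e₂} ⊕ Unit) =>
        IsSpanningTree ends' T' ∧ Sum.inr () ∉ T'), w e₂ * ∏ x ∈ T', w' x := by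
    refine Finset.sum_nbij' (fun T => downSet e₁ e₂ T)
      (fun T' => insert e₂ (upSet e₁ e₂ T')) ?_ ?_ ?_ ?_ ?_
    · intro T hT
      rw [Finset.mem_filter] at hT
      obtain ⟨-, ⟨hconnT, hcardT⟩, h1, h2⟩ := hT
      rw [Finset.mem_filter]
      refine ⟨Finset.mem_univ _, ⟨?_, ?_⟩, inr_not_mem_downSet ()⟩
      · have hco := (conn_one hdeg hends'old e₂ b hvb he₂
          (T.filter (fun e => e ≠ e₁ ∧ e ≠ e₂)) (hfiltp T)).1
        rw [filter_one₂ h2 h1] at hco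
        have := hco hconnT
        rwa [downSet_filter] at this
      · have hc : (downSet e₁ e₂ T).card =
            (T.filter (fun e => e ≠ e₁ ∧ e ≠ e₂)).card := by
          rw [← downSet_filter T]
          exact card_downSet _ (hfiltp T)
        have hTc : T.card = (T.filter (fun e => e ≠ e₁ ∧ e ≠ e₂)).card + 1 := by
          conv_lhs => rw [← filter_one₂ h2 h1]
          rw [Finset.card_insert_of_notMem (e₂_not_mem_filter T)]
        omega
    · intro T' hT'
      rw [Finset.mem_filter] at hT'
      obtain ⟨-, ⟨hconnT', hcardT'⟩, hf⟩ := hT'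
      rw [Finset.mem_filter]
      have hSu : ∀ e ∈ upSet e₁ e₂ T', e ≠ e₁ ∧ e ≠ e₂ := fun e he => mem_upSet_prop he
      refine ⟨Finset.mem_univ _, ⟨?_, ?_⟩, ?_, Finset.mem_insert_self _ _⟩
      · have hco := (conn_one hdeg hends'old e₂ b hvb he₂ (upSet e₁ e₂ T') hSu).2
        apply hco
        rwa [downSet_upSet, Finset.erase_eq_of_notMem hf]
      · have hu : (upSet e₁ e₂ T').card = T'.card := by
          have hc := card_downSet (e₁ := e₁) (e₂ := e₂) (upSet e₁ e₂ T') hSu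
          rw [downSet_upSet, Finset.erase_eq_of_notMem hf] at hc
          omega
        rw [Finset.card_insert_of_notMem (e₂_not_mem_upSet T')]
        omega
      · intro hmem
        rcases Finset.mem_insert.1 hmem with h | h
        · exact hne h
        · exact e₁_not_mem_upSet T' h
    · intro T hT
      rw [Finset.mem_filter] at hT
      obtain ⟨-, -, h1, h2⟩ := hT
      rw [upSet_downSet, filter_one₂ h2 h1]
    · intro T' hT'
      rw [Finset.mem_filter] at hT'
      obtain ⟨-, -, hf⟩ := hT'
      rw [downSet_insert (Or.inr rfl), downSet_upSet, Finset.erase_eq_of_notMem hf]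
    · intro T hT
      rw [Finset.mem_filter] at hT
      obtain ⟨-, -, h1, h2⟩ := hT
      have hdp : ∏ x ∈ downSet e₁ e₂ T, w' x = ∏ e ∈ T.filter
          (fun e => e ≠ e₁ ∧ e ≠ e₂), w e := by
        rw [← downSet_filter T, hw']
        exact prod_downSet _ (hfiltp T) w _
      rw [hdp]
      conv_lhs => rw [← filter_one₂ h2 h1]
      rw [Finset.prod_insert (e₂_not_mem_filter T)]
  rw [hLHS, hRHS, e12, eB, eC, ← Finset.mul_sum, ← Finset.mul_sum, ← Finset.mul_sum]
  ring
end
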